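/- arXiv:2409.07666 — 8 statements merged into one kernel-verified Lean document; each statement's English description precedes it below -/
import Mathlib

section
/- (Lemma 1, second inclusion) Every element of 𝒦_ext is a stabilizing distributed gain: if Z ∈ 𝒮, Q ≻ 0, and G = blkdiag(G_1,…,G_N) is invertible and satisfies [[G+Gᵀ−Q, (AG+BZ)ᵀ], [AG+BZ, Q]] ≻ 0, then K = ZG⁻¹ satisfies K ∈ 𝒮 and there exists a positive definite matrix P with (A+BK)ᵀP(A+BK) − P ≺ 0. -/
open Matrix

/-- Block index set: `Idx dims` indexes the rows/columns of an `n × n` matrix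
partitioned into blocks of sizes `dims 0, …, dims (N-1)`. -/
abbrev Idx {N : ℕ} (dims : Fin N → ℕ) : Type := Σ i : Fin N, Fin (dims i)

/-- The sparsity set `𝒮`: the `(i,j)` block vanishes whenever `i ≠ j` and `(i,j) ∉ ℰ`. -/
def Sparse {N : ℕ} (Gr : SimpleGraph (Fin N)) (dims : Fin N → ℕ)
    (K : Matrix (Idx dims) (Idx dims) ℝ) : Prop :=
  ∀ i j : Fin N, i ≠ j → ¬ Gr.Adj i j →
    ∀ (a : Fin (dims i)) (b : Fin (dims j)), K ⟨i, a⟩ ⟨j, b⟩ = 0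

/-- Block-diagonal (w.r.t. the partition `dims`): off-diagonal blocks vanish. -/
def BlkDiag {N : ℕ} (dims : Fin N → ℕ) (K : Matrix (Idx dims) (Idx dims) ℝ) : Prop :=
  ∀ p r : Idx dims, p.1 ≠ r.1 → K p r = 0

/-- `X ≺ 0`: negative definiteness. -/
def NegDef {m : Type*} [Fintype m] (X : Matrix m m ℝ) : Prop := (-X).PosDef

/-!
Write `M = AG + BZ`. By the Schur complement the LMI gives `G + Gᵀ - Q ≻ Mᵀ Q⁻¹ M`, and
`Gᵀ Q⁻¹ G ⪰ G + Gᵀ - Q` because the difference is `(G - Q)ᵀ Q⁻¹ (G - Q)`. Conjugating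
`Gᵀ Q⁻¹ G ≻ Mᵀ Q⁻¹ M` by `G⁻¹` shows that `P = Q⁻¹` is a Lyapunov matrix for `M G⁻¹ = A + BK`.
For sparsity, `G⁻¹` is block diagonal: `G` commutes with the diagonal matrix carrying the block
index of each coordinate, hence so does `G⁻¹`.
-/

namespace Matrix

variable {m n K : Type*} [Fintype m] [Fintype n] [DecidableEq n]
  [Field K] [PartialOrder K] [StarRing K]

theorem PosDef.posSemidef_conjTranspose_mul_inv_mul_sub {Q : Matrix n n K} (hQ : Q.PosDef)
    (G : Matrix n n K) : (Gᴴ * Q⁻¹ * G - (G + Gᴴ - Q)).PosSemidef := by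
  have := hQ.isUnit.invertible
  convert hQ.inv.posSemidef.conjTranspose_mul_mul_same (G - Q) using 1
  simp only [conjTranspose_sub, hQ.1.eq, Matrix.sub_mul, Matrix.mul_sub, Matrix.mul_assoc,
    mul_inv_of_invertible, inv_mul_of_invertible, Matrix.mul_one, Matrix.one_mul]
  abel

variable [StarOrderedRing K]

theorem PosDef.schur_complement_of_fromBlocks₂₂ {A : Matrix m m K} {B : Matrix m n K}
    {D : Matrix n n K} (h : (fromBlocks A B Bᴴ D).PosDef) (hD : D.PosDef) :
    (A - B * D⁻¹ * Bᴴ).PosDef := by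
  have := hD.isUnit.invertible
  refine .of_dotProduct_mulVec_pos ((PosDef.fromBlocks₂₂ A B hD).mp h.posSemidef).1
    fun x hx => ?_
  have hxy : x ⊕ᵥ -((D⁻¹ * Bᴴ) *ᵥ x) ≠ 0 := fun h0 =>
    hx (by simpa using congrArg (· ∘ Sum.inl) h0)
  have := h.dotProduct_mulVec_pos hxy
  rwa [dotProduct_mulVec, schur_complement_eq₂₂ A B _ _ hD.1, add_neg_cancel, star_zero,
    zero_vecMul, zero_dotProduct, zero_add, ← dotProduct_mulVec] at this

theorem PosDef.inv_sub_conjTranspose_mul_inv_mul_of_fromBlocks {G Q M : Matrix n n K}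
    (hQ : Q.PosDef) (hG : IsUnit G) (h : (fromBlocks (G + Gᴴ - Q) Mᴴ M Q).PosDef) :
    (Q⁻¹ - (M * G⁻¹)ᴴ * Q⁻¹ * (M * G⁻¹)).PosDef := by
  have hS := PosDef.schur_complement_of_fromBlocks₂₂ (B := Mᴴ) (by simpa using h) hQ
  have hU : (Gᴴ * Q⁻¹ * G - Mᴴ * Q⁻¹ * M).PosDef := by
    simpa using PosDef.posSemidef_add (hQ.posSemidef_conjTranspose_mul_inv_mul_sub G) hS
  have := hG.invertible
  convert hU.conjTranspose_mul_mul_same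
    (mulVec_injective_of_isUnit (isUnit_nonsing_inv_iff.mpr hG)) using 1
  simp only [conjTranspose_mul, Matrix.mul_assoc, Matrix.mul_sub, Matrix.sub_mul,
    mul_inv_of_invertible, Matrix.mul_one, sub_left_inj]
  rw [← Matrix.mul_assoc, ← conjTranspose_mul, mul_inv_of_invertible, conjTranspose_one,
    Matrix.one_mul]

end Matrix

section Blocks

variable {N : ℕ} {dims : Fin N → ℕ}

theorem blkDiag_iff_commute_diagonal {G : Matrix (Idx dims) (Idx dims) ℝ} :
    BlkDiag dims G ↔ Commute G (diagonal fun p : Idx dims => ((p.1 : ℕ) : ℝ)) := by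
  simp only [BlkDiag, Commute, SemiconjBy, ← Matrix.ext_iff, mul_diagonal, diagonal_mul]
  refine forall₂_congr fun p r => ?_
  rw [mul_comm (((p.1 : ℕ) : ℝ)), mul_eq_mul_left_iff, Nat.cast_inj, Fin.val_inj, eq_comm,
    or_comm, or_iff_not_imp_right, ne_comm]

theorem BlkDiag.inv {G : Matrix (Idx dims) (Idx dims) ℝ} (hG : BlkDiag dims G) (hGu : IsUnit G) :
    BlkDiag dims G⁻¹ := by
  rw [blkDiag_iff_commute_diagonal] at hG ⊢
  obtain ⟨u, rfl⟩ := hGu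
  rw [← coe_units_inv]
  exact hG.units_inv_left

theorem Sparse.mul_blkDiag {Gr : SimpleGraph (Fin N)} {Z H : Matrix (Idx dims) (Idx dims) ℝ}
    (hZ : Sparse Gr dims Z) (hH : BlkDiag dims H) : Sparse Gr dims (Z * H) := by
  intro i j hij hadj a b
  rw [mul_apply]
  refine Finset.sum_eq_zero fun ⟨k, c⟩ _ => ?_
  by_cases hk : k = j
  · subst hk
    rw [hZ i k hij hadj a c, zero_mul]
  · rw [hH ⟨k, c⟩ ⟨j, b⟩ hk, mul_zero]

end Blocks

/-- Lemma 1, second inclusion: `𝒦_ext ⊆ 𝒦_all`. -/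
theorem stmt1 {N : ℕ} (Gr : SimpleGraph (Fin N)) (dims : Fin N → ℕ)
    (A B Z Qm Gm : Matrix (Idx dims) (Idx dims) ℝ)
    (hZ : Sparse Gr dims Z) (hQpd : Qm.PosDef) (hGbd : BlkDiag dims Gm) (hGu : IsUnit Gm)
    (hLMI : (fromBlocks (Gm + Gmᵀ - Qm) (A * Gm + B * Z)ᵀ (A * Gm + B * Z) Qm).PosDef) :
    Sparse Gr dims (Z * Gm⁻¹) ∧
      ∃ P : Matrix (Idx dims) (Idx dims) ℝ, P.PosDef ∧
        NegDef ((A + B * (Z * Gm⁻¹))ᵀ * P * (A + B * (Z * Gm⁻¹)) - P) := by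
  refine ⟨hZ.mul_blkDiag (hGbd.inv hGu), Qm⁻¹, hQpd.inv, ?_⟩
  have hK : (A * Gm + B * Z) * Gm⁻¹ = A + B * (Z * Gm⁻¹) := by
    rw [Matrix.add_mul, mul_nonsing_inv_cancel_right _ _ ((isUnit_iff_isUnit_det Gm).mp hGu),
      Matrix.mul_assoc]
  have hLyap := PosDef.inv_sub_conjTranspose_mul_inv_mul_of_fromBlocks hQpd hGu
    (by simpa only [conjTranspose_eq_transpose_of_trivial] using hLMI)
  rw [NegDef, neg_sub]
  simpa only [hK, conjTranspose_eq_transpose_of_trivial] using hLyap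
end

section
/- (Lemma 2, chordal converse; Agler decomposition) Suppose 𝒢 is chordal (every cycle of length four or more has a chord) and C_1,…,C_q is the list of all maximal cliques of 𝒢. Then a symmetric matrix P satisfies P ∈ 𝒮 and P ≻ 0 if and only if there exists P̃ = blkdiag(P̃_1,…,P̃_q) ≻ 0 with P̃_k ∈ ℝ^{n_{C_k}×n_{C_k}} such that P = EᵀP̃E = Σ_{k=1}^q E_{C_k}ᵀ P̃_k E_{C_k}. -/
open Matrix

/-- Row index set of the stacked clique selector matrix `E`. -/
abbrev CIdx {N q : ℕ} (dims : Fin N → ℕ) (C : Fin q → Finset (Fin N)) : Type :=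
  Σ k : Fin q, Σ j : {x : Fin N // x ∈ C k}, Fin (dims j.1)

/-- The stacked selector matrix `E = [E_{C_1}ᵀ, …, E_{C_q}ᵀ]ᵀ`. -/
def Emat {N q : ℕ} (dims : Fin N → ℕ) (C : Fin q → Finset (Fin N)) :
    Matrix (CIdx dims C) (Idx dims) ℝ :=
  fun p i => if (⟨p.2.1.1, p.2.2⟩ : Idx dims) = i then 1 else 0

/-- Clique-block-diagonal matrices `blkdiag(X_1, …, X_q)` with `X_k ∈ ℝ^{n_{C_k} × n_{C_k}}`. -/
def CliqueBlkDiag {N q : ℕ} (dims : Fin N → ℕ) (C : Fin q → Finset (Fin N))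
    (X : Matrix (CIdx dims C) (CIdx dims C) ℝ) : Prop :=
  ∀ p r : CIdx dims C, p.1 ≠ r.1 → X p r = 0

/-- `C_1, …, C_q` are cliques of the graph. -/
def IsCliques {N q : ℕ} (Gr : SimpleGraph (Fin N)) (C : Fin q → Finset (Fin N)) : Prop :=
  ∀ k : Fin q, ∀ i ∈ C k, ∀ j ∈ C k, i ≠ j → Gr.Adj i j

/-- Assumption 1: every node is covered, and two distinct nodes share a clique iff adjacent. -/
def Assumption1 {N q : ℕ} (Gr : SimpleGraph (Fin N)) (C : Fin q → Finset (Fin N)) : Prop :=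
  (∀ i : Fin N, ∃ k, i ∈ C k) ∧
    ∀ i j : Fin N, i ≠ j → ((∃ k, i ∈ C k ∧ j ∈ C k) ↔ Gr.Adj i j)

/-- `N₀ = I − E (EᵀE)⁻¹ Eᵀ`. -/
noncomputable def N0 {N q : ℕ} (dims : Fin N → ℕ) (C : Fin q → Finset (Fin N)) :
    Matrix (CIdx dims C) (CIdx dims C) ℝ :=
  1 - Emat dims C * ((Emat dims C)ᵀ * Emat dims C)⁻¹ * (Emat dims C)ᵀ

/-- `M = blkdiag(N₀, N₀)`. -/
noncomputable def Mmat {N q : ℕ} (dims : Fin N → ℕ) (C : Fin q → Finset (Fin N)) :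
    Matrix (CIdx dims C ⊕ CIdx dims C) (CIdx dims C ⊕ CIdx dims C) ℝ :=
  fromBlocks (N0 dims C) 0 0 (N0 dims C)

/-- Dilation `X̃ = E X (EᵀE)⁻¹ Eᵀ`. -/
noncomputable def tilde {N q : ℕ} (dims : Fin N → ℕ) (C : Fin q → Finset (Fin N))
    (X : Matrix (Idx dims) (Idx dims) ℝ) : Matrix (CIdx dims C) (CIdx dims C) ℝ :=
  Emat dims C * X * ((Emat dims C)ᵀ * Emat dims C)⁻¹ * (Emat dims C)ᵀ

/-- The gain `(EᵀE)⁻¹ Eᵀ Z̃ G̃⁻¹ E`. -/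
noncomputable def gainCl {N q : ℕ} (dims : Fin N → ℕ) (C : Fin q → Finset (Fin N))
    (Zt Gt : Matrix (CIdx dims C) (CIdx dims C) ℝ) : Matrix (Idx dims) (Idx dims) ℝ :=
  ((Emat dims C)ᵀ * Emat dims C)⁻¹ * (Emat dims C)ᵀ * Zt * Gt⁻¹ * Emat dims C

/-- Chordality: every cycle of length at least four has a chord. -/
def IsChordal {N : ℕ} (Gr : SimpleGraph (Fin N)) : Prop :=
  ∀ (v : Fin N) (w : Gr.Walk v v), w.IsCycle → 4 ≤ w.length →
    ∃ a b : Fin N, a ∈ w.support ∧ b ∈ w.support ∧ Gr.Adj a b ∧ s(a, b) ∉ w.edges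

/-- `C_1, …, C_q` is the list of all maximal cliques of the graph. -/
def ListsMaximalCliques {N q : ℕ} (Gr : SimpleGraph (Fin N))
    (C : Fin q → Finset (Fin N)) : Prop :=
  (∀ k : Fin q, Gr.IsClique (C k : Set (Fin N)) ∧
    ∀ s : Finset (Fin N), Gr.IsClique (s : Set (Fin N)) → C k ⊆ s → s = C k) ∧
  ∀ s : Finset (Fin N), Gr.IsClique (s : Set (Fin N)) →
    (∀ t : Finset (Fin N), Gr.IsClique (t : Set (Fin N)) → s ⊆ t → t = s) →
    ∃ k : Fin q, C k = s

/-!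
That `Eᵀ P̃ E = ∑ₖ E_{C_k}ᵀ P̃ₖ E_{C_k}` is sparse is a computation (its non-zero blocks lie inside
cliques), and it is positive definite because every node lies in a clique, so `E` is injective.

The decomposition is block Gaussian elimination along a perfect elimination ordering. A chordal
graph has a simplicial vertex (Dirac): if `S` is not a clique, pick non-adjacent `a, b`; the
neighbours of `a` touching the component `B` of `b` outside the closed neighbourhood of `a` form a
clique `T` (two non-adjacent ones would close a chordless cycle of length ≥ 4 through `a` and `B`),
and `T` splits `S` into two smaller pieces, each containing a simplicial vertex by induction.
Pivoting on the block of a simplicial `v` writes `P = P_{·v} P_{vv}⁻¹ P_{v·} + Q`: the first term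
is positive semidefinite and lives on the closed neighbourhood of `v`, a clique and hence inside
some `C_k`, while the Schur complement `Q` keeps the sparsity and is positive definite on the other
nodes. Induction gives `P = Eᵀ P̃ E` with `P̃ ⪰ 0`. Applied to `P - ε EᵀE`, still positive definite
for small `ε`, it gives `P = Eᵀ (P̃ + ε I) E` with `P̃ + ε I ≻ 0`.
-/

namespace SimpleGraph.Walk

variable {V : Type*} {G : SimpleGraph V} {x y : V}

theorem exists_length_lt_of_isChord (w : G.Walk x y) {u v : V} (h : w.IsChord s(u, v)) :
    ∃ w' : G.Walk x y, w'.length < w.length ∧ w'.support ⊆ w.support := by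
  obtain ⟨hadj, he, hu, hv⟩ := isChord_sym2Mk.mp h
  obtain ⟨i, rfl, hi⟩ := mem_support_iff_exists_getVert.mp hu
  obtain ⟨j, rfl, hj⟩ := mem_support_iff_exists_getVert.mp hv
  clear h hu hv
  wlog hij : i < j generalizing i j
  · refine this j hj i hi hadj.symm (by rwa [Sym2.eq_swap]) (lt_of_le_of_ne (not_lt.mp hij) ?_)
    rintro rfl
    exact hadj.ne rfl
  have hsucc : i + 1 ≠ j := by
    rintro rfl
    exact he ((mk_mem_edges_iff_exists w).mpr ⟨i, by omega, rfl⟩)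
  refine ⟨(w.take i).append (cons hadj (w.drop j)), ?_, ?_⟩
  · simp only [length_append, length_cons, take_length, drop_length]
    omega
  · intro z hz
    rw [mem_support_append_iff, support_cons, List.mem_cons] at hz
    rcases hz with hz | rfl | hz
    · exact (isSubwalk_take w i).support_subset hz
    · exact getVert_mem_support w i
    · exact (isSubwalk_drop w j).support_subset hz

theorem exists_isPath_isChordless (w : G.Walk x y) :
    ∃ p : G.Walk x y, p.IsPath ∧ p.IsChordless ∧ p.support ⊆ w.support := by
  classical
  induction hn : w.length using Nat.strong_induction_on generalizing w with
  | _ n ih =>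
  by_cases hc : w.bypass.IsChordless
  · exact ⟨w.bypass, w.bypass_isPath, hc, w.support_bypass_subset_support⟩
  · obtain ⟨e, he⟩ : ∃ e, w.bypass.IsChord e := by
      simpa [IsChordless] using hc
    induction e using Sym2.ind with
    | _ u v =>
    obtain ⟨w', hlt, hsub⟩ := w.bypass.exists_length_lt_of_isChord he
    obtain ⟨p, hp, hpc, hps⟩ :=
      ih w'.length (hn ▸ hlt.trans_le w.length_bypass_le_length) w' rfl
    exact ⟨p, hp, hpc, fun z hz => w.support_bypass_subset_support (hsub (hps hz))⟩

end SimpleGraph.Walk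

namespace SimpleGraph

variable {V : Type*} {G : SimpleGraph V}

theorem Adj.of_walk_avoiding_closedNbhd
    (hch : ∀ (v : V) (c : G.Walk v v), c.IsCycle → 4 ≤ c.length → ¬ c.IsChordless)
    {a x y : V} (hax : G.Adj a x) (hay : G.Adj a y) (hxy : x ≠ y) (w : G.Walk x y)
    (hw : ∀ z ∈ w.support, z = x ∨ z = y ∨ (z ≠ a ∧ ¬ G.Adj a z)) : G.Adj x y := by
  by_contra hnadj
  obtain ⟨p, hp, hpc, hps⟩ := w.exists_isPath_isChordless
  have hap : a ∉ p.support := fun ha => by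
    rcases hw a (hps ha) with rfl | rfl | h
    · exact hax.ne rfl
    · exact hay.ne rfl
    · exact h.1 rfl
  have hlen : 2 ≤ p.length := by
    by_contra! h
    interval_cases hl : p.length
    · exact hxy (Walk.eq_of_length_eq_zero hl)
    · exact hnadj (Walk.adj_of_length_eq_one hl)
  -- `p` followed by `y, a, x` is a chordless cycle of length at least four.
  set q : G.Walk y x := Walk.cons hay.symm (Walk.cons hax Walk.nil)
  have hcyc : (p.append q).IsCycle := by
    refine hp.isCycle_append ?_ ?_ (Or.inr (by simp [q]))
    · simp [q, hax.ne, hay.ne.symm, hxy.symm]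
    · have hx : x ∉ p.support.tail := by
        have := hp.support_nodup
        rw [← Walk.cons_tail_support] at this
        exact (List.nodup_cons.mp this).1
      simp [q, List.disjoint_right, hx]
      exact fun h => hap (List.mem_of_mem_tail h)
  refine hch x _ hcyc (by simp [q]; omega) ?_
  have hnbr : ∀ z ∈ p.support, G.Adj a z → z = x ∨ z = y := fun z hz h => by
    rcases hw z (hps hz) with h' | h' | h' <;> tauto
  rw [Walk.isChordless_iff_forall_mem_edges]
  intro u v hu hv huv
  simp only [Walk.support_append, q, Walk.support_cons, Walk.support_nil, List.tail_cons,
    List.mem_append, List.mem_cons, List.not_mem_nil, or_false] at hu hv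
  simp only [Walk.edges_append, q, Walk.edges_cons, Walk.edges_nil, List.mem_append,
    List.mem_cons, List.not_mem_nil, or_false]
  have hmem : ∀ z, z ∈ p.support ∨ z = a ∨ z = x → z ∈ p.support ∨ z = a := by
    rintro z (h | h | rfl)
    · exact Or.inl h
    · exact Or.inr h
    · exact Or.inl p.start_mem_support
  rcases hmem u hu with hu' | rfl <;> rcases hmem v hv with hv' | rfl
  · exact Or.inl (hpc.mem_edges hu' hv' huv)
  · rcases hnbr u hu' huv.symm with rfl | rfl
    · simp [Sym2.eq_swap]
    · simp
  · rcases hnbr v hv' huv with rfl | rfl <;> simp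
  · exact absurd huv (G.irrefl)

variable [DecidableEq V]

def IsSimplicialIn (G : SimpleGraph V) (S : Finset V) (v : V) : Prop :=
  v ∈ S ∧ G.IsClique ((S : Set V) ∩ G.neighborSet v)

theorem exists_isClique_separator
    (hch : ∀ (v : V) (c : G.Walk v v), c.IsCycle → 4 ≤ c.length → ¬ c.IsChordless)
    {S : Finset V} {a b : V} (hb : b ∈ S) (hab : a ≠ b) (hnadj : ¬ G.Adj a b) :
    ∃ B T : Finset V, B ⊆ S ∧ G.IsClique (T : Set V) ∧ b ∈ B ∧ a ∉ B ∧ a ∉ T ∧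
      ∀ w ∈ B, ∀ z ∈ S, G.Adj w z → z ∈ B ∪ T := by
  classical
  set U := S.filter fun z => z ≠ a ∧ ¬ G.Adj a z
  set B := U.filter fun z => ∃ p : G.Walk b z, ∀ u ∈ p.support, u ∈ U
  set T := S.filter fun t => G.Adj a t ∧ ∃ w ∈ B, G.Adj t w
  have hBU : B ⊆ U := Finset.filter_subset _ _
  have hUS : U ⊆ S := Finset.filter_subset _ _
  have hU : ∀ z ∈ U, z ≠ a ∧ ¬ G.Adj a z := fun z hz => (Finset.mem_filter.mp hz).2
  have hbU : b ∈ U := Finset.mem_filter.mpr ⟨hb, hab.symm, hnadj⟩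
  refine ⟨B, T, hBU.trans hUS, ?_, Finset.mem_filter.mpr ⟨hbU, Walk.nil, by simpa using hbU⟩,
    fun h => (hU a (hBU h)).1 rfl, fun h => G.irrefl (Finset.mem_filter.mp h).2.1, ?_⟩
  · intro x hx y hy hxy
    obtain ⟨-, hax, wx, hwx, hxw⟩ := Finset.mem_filter.mp hx
    obtain ⟨-, hay, wy, hwy, hyw⟩ := Finset.mem_filter.mp hy
    obtain ⟨-, px, hpx⟩ := Finset.mem_filter.mp hwx
    obtain ⟨-, py, hpy⟩ := Finset.mem_filter.mp hwy
    refine Adj.of_walk_avoiding_closedNbhd hch hax hay hxy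
      (Walk.cons hxw ((px.reverse.append py).concat hyw.symm)) fun z hz => ?_
    simp only [Walk.support_cons, Walk.support_concat, Walk.support_append,
      Walk.support_reverse, List.mem_cons, List.mem_append, List.mem_reverse] at hz
    rcases hz with rfl | ((hz | hz) | hz | hz)
    · exact Or.inl rfl
    · exact Or.inr (Or.inr (hU z (hpx z hz)))
    · exact Or.inr (Or.inr (hU z (hpy z (List.mem_of_mem_tail hz))))
    · exact Or.inr (Or.inl hz)
    · simp at hz
  · intro w hw z hz hwz
    by_cases haz : G.Adj a z
    · exact Finset.mem_union_right _ (Finset.mem_filter.mpr ⟨hz, haz, w, hw, hwz.symm⟩)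
    obtain ⟨hwU, p, hp⟩ := Finset.mem_filter.mp hw
    have hzU : z ∈ U := by
      refine Finset.mem_filter.mpr ⟨hz, ?_, haz⟩
      rintro rfl
      exact (hU w hwU).2 hwz.symm
    refine Finset.mem_union_left _ (Finset.mem_filter.mpr ⟨hzU, p.concat hwz, fun u hu => ?_⟩)
    rw [Walk.support_concat, List.mem_append, List.mem_singleton] at hu
    rcases hu with hu | rfl
    · exact hp u hu
    · exact hzU

theorem exists_isSimplicialIn_of_closed {S S' K : Finset V} (hS' : S' ⊆ S)
    (h : G.IsClique (S' : Set V) ∨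
      ∃ s₁ s₂, IsSimplicialIn G S' s₁ ∧ IsSimplicialIn G S' s₂ ∧ s₁ ≠ s₂ ∧ ¬ G.Adj s₁ s₂)
    (hK : K ⊆ S') (hKne : K.Nonempty) (hrest : G.IsClique ((S' \ K : Finset V) : Set V))
    (hclosed : ∀ k ∈ K, ∀ z ∈ S, G.Adj k z → z ∈ S') :
    ∃ s ∈ K, IsSimplicialIn G S s := by
  have hlift : ∀ k ∈ K, G.IsClique ((S' : Set V) ∩ G.neighborSet k) →
      IsSimplicialIn G S k := by
    refine fun k hk hcl => ⟨hS' (hK hk), hcl.subset ?_⟩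
    rintro z ⟨hzS, hkz⟩
    exact ⟨hclosed k hk z hzS hkz, hkz⟩
  rcases h with hcl | ⟨s₁, s₂, h₁, h₂, hne, hnadj⟩
  · obtain ⟨k, hk⟩ := hKne
    exact ⟨k, hk, hlift k hk (hcl.subset Set.inter_subset_left)⟩
  by_cases hs₁ : s₁ ∈ K
  · exact ⟨s₁, hs₁, hlift s₁ hs₁ h₁.2⟩
  by_cases hs₂ : s₂ ∈ K
  · exact ⟨s₂, hs₂, hlift s₂ hs₂ h₂.2⟩
  exact absurd (hrest (by simp [h₁.1, hs₁]) (by simp [h₂.1, hs₂]) hne) hnadj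

theorem isClique_or_exists_isSimplicialIn
    (hch : ∀ (v : V) (c : G.Walk v v), c.IsCycle → 4 ≤ c.length → ¬ c.IsChordless)
    (S : Finset V) : G.IsClique (S : Set V) ∨
      ∃ s₁ s₂, IsSimplicialIn G S s₁ ∧ IsSimplicialIn G S s₂ ∧ s₁ ≠ s₂ ∧ ¬ G.Adj s₁ s₂ := by
  induction S using Finset.strongInduction with
  | H S ih =>
  by_cases hS : G.IsClique (S : Set V)
  · exact Or.inl hS
  obtain ⟨a, ha, b, hb, hab, hnadj⟩ : ∃ a ∈ S, ∃ b ∈ S, a ≠ b ∧ ¬ G.Adj a b := by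
    simpa [SimpleGraph.IsClique, Set.Pairwise] using hS
  obtain ⟨B, T, hBS, hT, hbB, haB, haT, hclosed⟩ :=
    exists_isClique_separator hch hb hab hnadj
  -- `S = A ∪ T ∪ B` with no edges between `A` and `B`; induct on `A ∪ T` and on `T ∪ B`.
  set A := S \ (B ∪ T)
  have haA : a ∈ A := by simp [A, ha, haB, haT]
  have hAB : ∀ u ∈ A, ∀ w ∈ B, ¬ G.Adj u w := fun u hu w hw huw =>
    (Finset.mem_sdiff.mp hu).2 (hclosed w hw u (Finset.mem_sdiff.mp hu).1 huw.symm)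
  have hrest : ∀ z ∈ S, z ∉ A → z ∉ B → z ∈ T := fun z hz hzA hzB => by
    simp only [A, Finset.mem_sdiff, Finset.mem_union] at hzA
    tauto
  obtain ⟨s₁, hs₁A, hs₁⟩ := exists_isSimplicialIn_of_closed (S' := S \ B) (K := A)
    Finset.sdiff_subset (ih _ (Finset.sdiff_ssubset hBS ⟨b, hbB⟩))
    (Finset.sdiff_subset_sdiff le_rfl Finset.subset_union_left) ⟨a, haA⟩
    (hT.subset fun z hz => by
      simp only [Finset.coe_sdiff, Set.mem_sdiff, Finset.mem_coe] at hz
      exact hrest z hz.1.1 hz.2 hz.1.2)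
    fun u hu z hz huz => Finset.mem_sdiff.mpr ⟨hz, fun hzB => hAB u hu z hzB huz⟩
  obtain ⟨s₂, hs₂B, hs₂⟩ := exists_isSimplicialIn_of_closed (S' := S \ A) (K := B)
    Finset.sdiff_subset (ih _ (Finset.sdiff_ssubset (Finset.sdiff_subset) ⟨a, haA⟩))
    (fun z hz => by simp [A, hBS hz, hz]) ⟨b, hbB⟩
    (hT.subset fun z hz => by
      simp only [Finset.coe_sdiff, Set.mem_sdiff, Finset.mem_coe] at hz
      exact hrest z hz.1.1 hz.1.2 hz.2)
    fun w hw z hz hwz => by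
      have := hclosed w hw z hz hwz
      simp only [A, Finset.mem_sdiff, Finset.mem_union] at this ⊢
      tauto
  refine Or.inr ⟨s₁, s₂, hs₁, hs₂, ?_, hAB s₁ hs₁A s₂ hs₂B⟩
  rintro rfl
  exact (Finset.mem_sdiff.mp hs₁A).2 (Finset.mem_union_left _ hs₂B)

theorem exists_isSimplicialIn
    (hch : ∀ (v : V) (c : G.Walk v v), c.IsCycle → 4 ≤ c.length → ¬ c.IsChordless)
    {S : Finset V} (hS : S.Nonempty) : ∃ v, IsSimplicialIn G S v := by
  rcases isClique_or_exists_isSimplicialIn hch S with h | ⟨s, -, hs, -⟩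
  · obtain ⟨v, hv⟩ := hS
    exact ⟨v, hv, h.subset Set.inter_subset_left⟩
  · exact ⟨s, hs⟩

def closedNbhdIn (G : SimpleGraph V) [DecidableRel G.Adj] (S : Finset V) (v : V) : Finset V :=
  insert v (S.filter (G.Adj v))

theorem mem_closedNbhdIn [DecidableRel G.Adj] {S : Finset V} {v z : V} :
    z ∈ G.closedNbhdIn S v ↔ z = v ∨ z ∈ S ∧ G.Adj v z := by
  simp [closedNbhdIn]

theorem closedNbhdIn_subset [DecidableRel G.Adj] {S : Finset V} {v : V} (hv : v ∈ S) :
    G.closedNbhdIn S v ⊆ S :=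
  Finset.insert_subset hv (Finset.filter_subset _ _)

theorem IsSimplicialIn.isClique_closedNbhdIn [DecidableRel G.Adj] {S : Finset V} {v : V}
    (hv : IsSimplicialIn G S v) : G.IsClique (G.closedNbhdIn S v : Set V) := by
  rw [closedNbhdIn, Finset.coe_insert, Finset.coe_filter]
  exact hv.2.insert fun z hz _ => hz.2

end SimpleGraph

namespace Matrix

theorem transpose_mulVec_dotProduct {α β R : Type*} [Fintype α] [Fintype β] [CommSemiring R]
    (M : Matrix α β R) (a : α → R) (b : β → R) : (Mᵀ *ᵥ a) ⬝ᵥ b = a ⬝ᵥ (M *ᵥ b) := by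
  rw [mulVec_transpose, dotProduct_mulVec]

theorem IsSymm.dotProduct_mulVec_comm {α R : Type*} [Fintype α] [CommSemiring R]
    {M : Matrix α α R} (hM : M.IsSymm) (a b : α → R) : a ⬝ᵥ (M *ᵥ b) = b ⬝ᵥ (M *ᵥ a) := by
  rw [← transpose_mulVec_dotProduct, hM.eq, dotProduct_comm]

variable {ι κ : Type*}

section Selection

variable [DecidableEq ι]

def selection (f : κ → ι) : Matrix κ ι ℝ := (1 : Matrix ι ι ℝ).submatrix f id

variable (f : κ → ι)

theorem selection_mul [Fintype ι] {α : Type*} (M : Matrix ι α ℝ) :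
    selection f * M = M.submatrix f id :=
  one_submatrix_mul f (Equiv.refl ι) M

theorem mul_selection_transpose [Fintype ι] {α : Type*} [Fintype α] (M : Matrix α ι ℝ) :
    M * (selection f)ᵀ = M.submatrix id f := by
  rw [selection, transpose_submatrix, transpose_one]
  exact mul_submatrix_one (Equiv.refl ι) f M

theorem selection_mul_mul_selection_transpose [Fintype ι] [Fintype κ] (P : Matrix ι ι ℝ) :
    selection f * P * (selection f)ᵀ = P.submatrix f f := by
  rw [selection_mul, mul_selection_transpose, submatrix_submatrix]
  rfl

theorem selection_mulVec [Fintype ι] (x : ι → ℝ) : selection f *ᵥ x = x ∘ f := by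
  ext k
  simp [selection, mulVec, dotProduct, one_apply]

theorem selection_transpose_mulVec_apply_of_notMem_range [Fintype κ] (z : κ → ℝ) {i : ι}
    (hi : i ∉ Set.range f) : ((selection f)ᵀ *ᵥ z) i = 0 := by
  refine Finset.sum_eq_zero fun k _ => ?_
  simp only [selection, transpose_apply, submatrix_apply, id, one_apply]
  rw [if_neg fun h => hi ⟨k, h⟩, zero_mul]

theorem selection_transpose_mulVec_apply [Fintype κ] [DecidableEq κ] {f : κ → ι}
    (hf : Function.Injective f) (z : κ → ℝ) (k : κ) : ((selection f)ᵀ *ᵥ z) (f k) = z k := by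
  simp [selection, mulVec, dotProduct, one_apply, hf.eq_iff]

theorem selection_transpose_mul_mul_selection_apply_of_notMem_range_left [Fintype κ]
    (Y : Matrix κ κ ℝ) {p : ι} (hp : p ∉ Set.range f) (r : ι) :
    ((selection f)ᵀ * Y * selection f) p r = 0 := by
  simp only [mul_apply, transpose_apply, selection, submatrix_apply, id, one_apply]
  refine Finset.sum_eq_zero fun b _ => ?_
  rw [Finset.sum_eq_zero fun a _ => by rw [if_neg fun h => hp ⟨a, h⟩, zero_mul], zero_mul]

theorem selection_transpose_mul_mul_selection_apply_of_notMem_range_right [Fintype κ]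
    (Y : Matrix κ κ ℝ) (p : ι) {r : ι} (hr : r ∉ Set.range f) :
    ((selection f)ᵀ * Y * selection f) p r = 0 := by
  simp only [mul_apply, transpose_apply, selection, submatrix_apply, id, one_apply]
  exact Finset.sum_eq_zero fun b _ => by rw [if_neg fun h => hr ⟨b, h⟩, mul_zero]

theorem selection_transpose_mul_mul_selection_apply [Fintype κ] [DecidableEq κ] {f : κ → ι}
    (hf : Function.Injective f) (Y : Matrix κ κ ℝ) (a b : κ) :
    ((selection f)ᵀ * Y * selection f) (f a) (f b) = Y a b := by
  simp [mul_apply, selection, one_apply, hf.eq_iff]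

theorem selection_transpose_mul_submatrix_mul_selection [Fintype κ] [DecidableEq κ]
    {f : κ → ι} (hf : Function.Injective f) {T : Matrix ι ι ℝ}
    (hT : ∀ p r, T p r ≠ 0 → p ∈ Set.range f ∧ r ∈ Set.range f) :
    (selection f)ᵀ * T.submatrix f f * selection f = T := by
  ext p r
  by_cases hp : p ∈ Set.range f
  · by_cases hr : r ∈ Set.range f
    · obtain ⟨a, rfl⟩ := hp
      obtain ⟨b, rfl⟩ := hr
      exact selection_transpose_mul_mul_selection_apply hf _ a b
    · rw [selection_transpose_mul_mul_selection_apply_of_notMem_range_right f _ p hr]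
      exact (not_imp_comm.mp (hT p r) fun h => hr h.2).symm
  · rw [selection_transpose_mul_mul_selection_apply_of_notMem_range_left f _ hp r]
    exact (not_imp_comm.mp (hT p r) fun h => hp h.1).symm

end Selection

section Pivot

variable [Fintype κ] [DecidableEq κ]

/-- `P - pivotPart P f` is the Schur complement of the pivot block `P.submatrix f f`. -/
noncomputable def pivotPart (P : Matrix ι ι ℝ) (f : κ → ι) : Matrix ι ι ℝ :=
  P.submatrix id f * (P.submatrix f f)⁻¹ * P.submatrix f id

variable {P : Matrix ι ι ℝ} {f : κ → ι}

theorem pivotPart_apply_eq_zero_of_row {p : ι} (hp : ∀ k, P p (f k) = 0) (r : ι) :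
    pivotPart P f p r = 0 := by
  simp [pivotPart, mul_apply, hp]

theorem pivotPart_apply_eq_zero_of_col {r : ι} (hr : ∀ k, P (f k) r = 0) (p : ι) :
    pivotPart P f p r = 0 := by
  simp [pivotPart, mul_apply, hr]

theorem submatrix_pivotPart_row (hA : IsUnit (P.submatrix f f).det) :
    (pivotPart P f).submatrix f id = P.submatrix f id := by
  rw [pivotPart, submatrix_mul _ _ _ id _ Function.bijective_id,
    submatrix_mul _ _ _ id _ Function.bijective_id, submatrix_id_id, submatrix_id_id,
    submatrix_submatrix, Function.id_comp, Function.comp_id, mul_nonsing_inv _ hA,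
    Matrix.one_mul]

theorem submatrix_pivotPart_col (hA : IsUnit (P.submatrix f f).det) :
    (pivotPart P f).submatrix id f = P.submatrix id f := by
  rw [pivotPart, submatrix_mul _ _ _ id _ Function.bijective_id, submatrix_id_id,
    submatrix_submatrix, Function.id_comp, Function.comp_id, Matrix.mul_assoc,
    nonsing_inv_mul _ hA, Matrix.mul_one]

theorem pivotPart_apply_left (hA : IsUnit (P.submatrix f f).det) (a : κ) (r : ι) :
    pivotPart P f (f a) r = P (f a) r :=
  congrFun (congrFun (submatrix_pivotPart_row hA) a) r

theorem pivotPart_apply_right (hA : IsUnit (P.submatrix f f).det) (p : ι) (b : κ) :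
    pivotPart P f p (f b) = P p (f b) :=
  congrFun (congrFun (submatrix_pivotPart_col hA) p) b

variable [Fintype ι]

theorem pivotPart_posSemidef (hP : P.IsSymm) (hA : (P.submatrix f f).PosSemidef) :
    (pivotPart P f).PosSemidef := by
  have h := hA.inv.conjTranspose_mul_mul_same (P.submatrix f id)
  rwa [conjTranspose_eq_transpose_of_trivial, transpose_submatrix, hP.eq] at h

variable [DecidableEq ι]

/-- Completing the square with `y = x - (selection f)ᵀ P_{ff}⁻¹ P_{f·} x`. -/
theorem exists_dotProduct_mulVec_eq_sub_pivotPart (hP : P.IsSymm)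
    (hA : IsUnit (P.submatrix f f).det) (x : ι → ℝ) :
    ∃ y : ι → ℝ, (∀ i ∉ Set.range f, y i = x i) ∧
      y ⬝ᵥ (P *ᵥ y) = x ⬝ᵥ ((P - pivotPart P f) *ᵥ x) := by
  set F : Matrix κ ι ℝ := selection f
  set w := F *ᵥ (P *ᵥ x)
  set z := (P.submatrix f f)⁻¹ *ᵥ w
  set u := Fᵀ *ᵥ z with hu
  refine ⟨x - u, fun i hi => ?_, ?_⟩
  · rw [Pi.sub_apply, hu, selection_transpose_mulVec_apply_of_notMem_range f z hi, sub_zero]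
  have hTx : pivotPart P f *ᵥ x = P *ᵥ u := by
    simp only [pivotPart, ← mul_selection_transpose, ← selection_mul, mulVec_mulVec,
      Matrix.mul_assoc, u, z, w, F]
  have huPu : u ⬝ᵥ (P *ᵥ u) = z ⬝ᵥ w := by
    rw [hu, transpose_mulVec_dotProduct, mulVec_mulVec, mulVec_mulVec,
      selection_mul_mul_selection_transpose, mulVec_mulVec, mul_nonsing_inv _ hA, one_mulVec]
  have huPx : u ⬝ᵥ (P *ᵥ x) = z ⬝ᵥ w := transpose_mulVec_dotProduct F z _
  calc (x - u) ⬝ᵥ (P *ᵥ (x - u))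
      = x ⬝ᵥ (P *ᵥ x) - x ⬝ᵥ (P *ᵥ u) - u ⬝ᵥ (P *ᵥ x) + u ⬝ᵥ (P *ᵥ u) := by
        simp only [mulVec_sub, dotProduct_sub, sub_dotProduct]
        ring
    _ = x ⬝ᵥ (P *ᵥ x) - x ⬝ᵥ (P *ᵥ u) := by
        rw [hP.dotProduct_mulVec_comm x u, huPx, huPu]
        ring
    _ = x ⬝ᵥ ((P - pivotPart P f) *ᵥ x) := by
        rw [sub_mulVec, dotProduct_sub, hTx]

theorem posDef_submatrix_of_forall_dotProduct_pos (hf : Function.Injective f) (hP : P.IsSymm)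
    (hpos : ∀ x : ι → ℝ, x ≠ 0 → (∀ i ∉ Set.range f, x i = 0) → 0 < x ⬝ᵥ (P *ᵥ x)) :
    (P.submatrix f f).PosDef := by
  refine posDef_iff_dotProduct_mulVec.mpr ⟨(isHermitian_iff_isSymm.mpr hP).submatrix f,
    fun y hy => ?_⟩
  rw [star_trivial, ← selection_mul_mul_selection_transpose, ← mulVec_mulVec, ← mulVec_mulVec,
    ← transpose_mulVec_dotProduct]
  refine hpos _ (fun h0 => hy (funext fun k => ?_)) fun i hi =>
    selection_transpose_mulVec_apply_of_notMem_range f y hi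
  rw [← selection_transpose_mulVec_apply hf y k, h0, Pi.zero_apply, Pi.zero_apply]

end Pivot

section LoewnerOrder

open scoped MatrixOrder

variable {m : Type*} [Fintype m] [DecidableEq m]

theorem PosDef.exists_smul_one_le {P : Matrix m m ℝ} (hP : P.PosDef) :
    ∃ r : ℝ, 0 < r ∧ r • (1 : Matrix m m ℝ) ≤ P := by
  cases subsingleton_or_nontrivial (Matrix m m ℝ)
  · exact ⟨1, one_pos, (Subsingleton.elim _ P).le⟩
  have h := isStrictlyPositive_iff_posDef.mpr hP
  obtain ⟨r, hr, hle⟩ := (CFC.exists_pos_algebraMap_le_iff h.isSelfAdjoint).mpr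
    fun x hx => h.spectrum_pos hx
  exact ⟨r, hr, by simpa [Algebra.algebraMap_eq_smul_one] using hle⟩

theorem IsHermitian.exists_le_smul_one {A : Matrix m m ℝ} (hA : A.IsHermitian) :
    ∃ s : ℝ, 0 < s ∧ A ≤ s • (1 : Matrix m m ℝ) := by
  obtain ⟨s, hs⟩ := (finite_real_spectrum (A := A)).bddAbove
  refine ⟨|s| + 1, by positivity, ?_⟩
  have := le_algebraMap_of_spectrum_le (r := |s| + 1) (a := A)
    (fun x hx => (hs hx).trans ((le_abs_self s).trans (le_add_of_nonneg_right zero_le_one))) hA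
  simpa [Algebra.algebraMap_eq_smul_one] using this

theorem PosDef.exists_posDef_sub_smul {P A : Matrix m m ℝ} (hP : P.PosDef) (hA : A.IsHermitian) :
    ∃ ε : ℝ, 0 < ε ∧ (P - ε • A).PosDef := by
  obtain ⟨r, hr, hrP⟩ := hP.exists_smul_one_le
  obtain ⟨s, hs, hAs⟩ := hA.exists_le_smul_one
  refine ⟨r / (2 * s), by positivity, ?_⟩
  have h1 : (P - r • 1).PosSemidef := hrP
  have h2 : (s • 1 - A).PosSemidef := hAs
  have hsplit : P - (r / (2 * s)) • A
      = (P - r • 1) + (r / (2 * s)) • (s • 1 - A) + (r / 2) • (1 : Matrix m m ℝ) := by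
    have hεs : r / (2 * s) * s = r / 2 := by field_simp
    rw [smul_sub, smul_smul, hεs]
    module
  rw [hsplit]
  exact (PosDef.one.smul (by positivity)).posSemidef_add (h1.add (h2.smul (by positivity)))

end LoewnerOrder

end Matrix
section BlockMatrices

variable {N q : ℕ} {dims : Fin N → ℕ} {C : Fin q → Finset (Fin N)}

def CIdx.toIdx (c : CIdx dims C) : Idx dims := ⟨c.2.1.1, c.2.2⟩

theorem CIdx.toIdx_surjective (hC : ∀ i, ∃ k, i ∈ C k) :
    Function.Surjective (CIdx.toIdx (dims := dims) (C := C)) := by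
  rintro ⟨i, a⟩
  obtain ⟨k, hk⟩ := hC i
  exact ⟨⟨k, ⟨i, hk⟩, a⟩, rfl⟩

theorem Emat_eq_selection : Emat dims C = selection CIdx.toIdx := rfl

theorem cliqueBlkDiag_one : CliqueBlkDiag dims C 1 :=
  fun _ _ h => one_apply_ne fun hpr => h (congrArg Sigma.fst hpr)

theorem CliqueBlkDiag.add {X Y : Matrix (CIdx dims C) (CIdx dims C) ℝ}
    (hX : CliqueBlkDiag dims C X) (hY : CliqueBlkDiag dims C Y) :
    CliqueBlkDiag dims C (X + Y) :=
  fun p r h => by rw [Matrix.add_apply, hX p r h, hY p r h, add_zero]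

theorem sparse_Emat_transpose_mul_mul {Gr : SimpleGraph (Fin N)}
    (hC : ∀ k, Gr.IsClique (C k : Set (Fin N))) {X : Matrix (CIdx dims C) (CIdx dims C) ℝ}
    (hX : CliqueBlkDiag dims C X) : Sparse Gr dims ((Emat dims C)ᵀ * X * Emat dims C) := by
  intro i j hij hnadj a b
  simp only [mul_apply, Finset.sum_mul, transpose_apply]
  refine Finset.sum_eq_zero fun c' _ => Finset.sum_eq_zero fun c _ => ?_
  simp only [Emat]
  split_ifs with hc hc'
  · rw [one_mul, mul_one]
    by_contra hX0
    have hi : i ∈ C c.1 := by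
      obtain rfl : c.2.1.1 = i := congrArg Sigma.fst hc
      exact c.2.1.2
    have hj : j ∈ C c'.1 := by
      obtain rfl : c'.2.1.1 = j := congrArg Sigma.fst hc'
      exact c'.2.1.2
    rw [show c.1 = c'.1 from by_contra fun h => hX0 (hX c c' h)] at hi
    exact hnadj (hC c'.1 hi hj hij)
  all_goals simp

theorem Emat_transpose_mul_Emat_apply_of_ne {p r : Idx dims} (h : p ≠ r) :
    ((Emat dims C)ᵀ * Emat dims C) p r = 0 := by
  refine Finset.sum_eq_zero fun c _ => ?_
  simp only [transpose_apply, Emat]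
  split_ifs with hp hr
  · exact absurd (hp.symm.trans hr) h
  all_goals simp

theorem posDef_Emat_transpose_mul_mul (hC : ∀ i, ∃ k, i ∈ C k)
    {X : Matrix (CIdx dims C) (CIdx dims C) ℝ} (hX : X.PosDef) :
    ((Emat dims C)ᵀ * X * Emat dims C).PosDef := by
  have hinj : Function.Injective (Emat dims C).mulVec := by
    intro x y hxy
    rw [Emat_eq_selection, selection_mulVec, selection_mulVec] at hxy
    exact (CIdx.toIdx_surjective hC).injective_comp_right hxy
  simpa [conjTranspose_eq_transpose_of_trivial] using hX.conjTranspose_mul_mul_same hinj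

def SupportedOn (S : Finset (Fin N)) (M : Matrix (Idx dims) (Idx dims) ℝ) : Prop :=
  ∀ p r, M p r ≠ 0 → p.1 ∈ S ∧ r.1 ∈ S

def PosDefOn (S : Finset (Fin N)) (M : Matrix (Idx dims) (Idx dims) ℝ) : Prop :=
  ∀ x : Idx dims → ℝ, x ≠ 0 → (∀ p : Idx dims, p.1 ∉ S → x p = 0) → 0 < x ⬝ᵥ (M *ᵥ x)

theorem SupportedOn.mono {S S' : Finset (Fin N)} {M : Matrix (Idx dims) (Idx dims) ℝ}
    (h : SupportedOn S M) (hS : S ⊆ S') : SupportedOn S' M :=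
  fun p r hpr => (h p r hpr).imp (fun hp => hS hp) fun hr => hS hr

theorem SupportedOn.sub {S : Finset (Fin N)} {M M' : Matrix (Idx dims) (Idx dims) ℝ}
    (h : SupportedOn S M) (h' : SupportedOn S M') : SupportedOn S (M - M') := by
  intro p r hpr
  by_contra hpr'
  refine hpr ?_
  rw [Matrix.sub_apply, not_imp_comm.mp (h p r) hpr', not_imp_comm.mp (h' p r) hpr', sub_zero]

def CliqueDecomposable (dims : Fin N → ℕ) (C : Fin q → Finset (Fin N))
    (P : Matrix (Idx dims) (Idx dims) ℝ) : Prop :=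
  ∃ Pt : Matrix (CIdx dims C) (CIdx dims C) ℝ,
    CliqueBlkDiag dims C Pt ∧ Pt.PosSemidef ∧ P = (Emat dims C)ᵀ * Pt * Emat dims C

theorem CliqueDecomposable.zero : CliqueDecomposable dims C 0 :=
  ⟨0, fun _ _ _ => rfl, PosSemidef.zero, by rw [Matrix.mul_zero, Matrix.zero_mul]⟩

theorem CliqueDecomposable.add {P P' : Matrix (Idx dims) (Idx dims) ℝ}
    (h : CliqueDecomposable dims C P) (h' : CliqueDecomposable dims C P') :
    CliqueDecomposable dims C (P + P') := by
  obtain ⟨Pt, hbd, hpsd, rfl⟩ := h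
  obtain ⟨Pt', hbd', hpsd', rfl⟩ := h'
  exact ⟨Pt + Pt', hbd.add hbd', hpsd.add hpsd', by rw [Matrix.mul_add, Matrix.add_mul]⟩

/-- The witness is `T` restricted to `C k`, placed in the `k`-th diagonal block. -/
theorem cliqueDecomposable_of_supportedOn {k : Fin q} {T : Matrix (Idx dims) (Idx dims) ℝ}
    (hT : T.PosSemidef) (hTk : SupportedOn (C k) T) : CliqueDecomposable dims C T := by
  set g : (Σ j : {x // x ∈ C k}, Fin (dims j.1)) → Idx dims := fun y => CIdx.toIdx ⟨k, y⟩
  have hg : Function.Injective g := by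
    rintro ⟨⟨j, hj⟩, a⟩ ⟨⟨j', hj'⟩, a'⟩ h
    simp only [g, CIdx.toIdx, Sigma.mk.injEq] at h
    obtain ⟨rfl, h⟩ := h
    simp [eq_of_heq h]
  set F : Matrix _ (CIdx dims C) ℝ := selection (Sigma.mk k)
  refine ⟨Fᵀ * T.submatrix g g * F, fun c c' hcc' => ?_, ?_, ?_⟩
  · by_cases hc : c.1 = k
    · refine selection_transpose_mul_mul_selection_apply_of_notMem_range_right _ _ c ?_
      rintro ⟨y, rfl⟩
      exact hcc' hc
    · refine selection_transpose_mul_mul_selection_apply_of_notMem_range_left _ _ ?_ c'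
      rintro ⟨y, rfl⟩
      exact hc rfl
  · simpa [conjTranspose_eq_transpose_of_trivial] using
      (hT.submatrix g).conjTranspose_mul_mul_same F
  · have hFE : F * Emat dims C = selection g := by
      rw [Emat_eq_selection, selection_mul]
      rfl
    rw [← Matrix.mul_assoc, ← Matrix.mul_assoc, ← transpose_mul, Matrix.mul_assoc, hFE,
      selection_transpose_mul_submatrix_mul_selection hg]
    intro p r hpr
    obtain ⟨hp, hr⟩ := hTk p r hpr
    exact ⟨⟨⟨⟨p.1, hp⟩, p.2⟩, rfl⟩, ⟨⟨⟨r.1, hr⟩, r.2⟩, rfl⟩⟩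

end BlockMatrices

section Elimination

open SimpleGraph

variable {N : ℕ} {dims : Fin N → ℕ} {Gr : SimpleGraph (Fin N)} {S : Finset (Fin N)} {v : Fin N}
  {P : Matrix (Idx dims) (Idx dims) ℝ}

theorem posDefOn_sub_pivotPart (hv : v ∈ S) (hsymm : P.IsSymm) (hpd : PosDefOn S P)
    (hA : IsUnit (P.submatrix (Sigma.mk v) (Sigma.mk v)).det) :
    PosDefOn (S.erase v) (P - pivotPart P (Sigma.mk v)) := by
  intro x hx hxS
  obtain ⟨y, hyx, hy⟩ := exists_dotProduct_mulVec_eq_sub_pivotPart hsymm hA x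
  have hoff : ∀ p : Idx dims, p.1 ≠ v → y p = x p := fun p hp =>
    hyx p (by rintro ⟨a, rfl⟩; exact hp rfl)
  rw [← hy]
  refine hpd y (fun hy0 => hx (funext fun p => ?_)) fun p hp => ?_
  · by_cases hpv : p.1 = v
    · exact hxS p (by simp [hpv])
    · rw [← hoff p hpv, hy0]
  · have hpv : p.1 ≠ v := fun h => hp (h ▸ hv)
    rw [hoff p hpv]
    exact hxS p fun h => hp (Finset.mem_of_mem_erase h)

variable [DecidableRel Gr.Adj]

theorem mem_closedNbhdIn_of_apply_ne_zero (hsp : Sparse Gr dims P) (hsupp : SupportedOn S P)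
    {p : Idx dims} {a : Fin (dims v)} (h : P p ⟨v, a⟩ ≠ 0) : p.1 ∈ Gr.closedNbhdIn S v := by
  rw [mem_closedNbhdIn]
  by_contra! hp
  exact h (hsp p.1 v hp.1 (fun hadj => hp.2 (hsupp p _ h).1 hadj.symm) p.2 a)

theorem supportedOn_pivotPart (hsymm : P.IsSymm) (hsp : Sparse Gr dims P)
    (hsupp : SupportedOn S P) :
    SupportedOn (Gr.closedNbhdIn S v) (pivotPart P (Sigma.mk v)) := by
  refine fun p r hpr => ⟨?_, ?_⟩
  · by_contra hp
    refine hpr (pivotPart_apply_eq_zero_of_row (fun a => ?_) r)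
    exact not_imp_comm.mp (mem_closedNbhdIn_of_apply_ne_zero hsp hsupp) hp
  · by_contra hr
    refine hpr (pivotPart_apply_eq_zero_of_col (fun a => ?_) p)
    rw [← hsymm.apply]
    exact not_imp_comm.mp (mem_closedNbhdIn_of_apply_ne_zero hsp hsupp) hr

theorem sparse_sub_pivotPart (hv : IsSimplicialIn Gr S v) (hsymm : P.IsSymm)
    (hsp : Sparse Gr dims P) (hsupp : SupportedOn S P)
    (hA : IsUnit (P.submatrix (Sigma.mk v) (Sigma.mk v)).det) :
    Sparse Gr dims (P - pivotPart P (Sigma.mk v)) := by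
  intro i j hij hnadj a b
  rw [Matrix.sub_apply, hsp i j hij hnadj a b, zero_sub, neg_eq_zero]
  by_cases hi : i = v
  · subst hi
    exact (pivotPart_apply_left hA a _).trans (hsp _ _ hij hnadj a b)
  by_cases hj : j = v
  · subst hj
    exact (pivotPart_apply_right hA _ b).trans (hsp _ _ hij hnadj a b)
  by_contra hT
  obtain ⟨hiN, hjN⟩ := supportedOn_pivotPart hsymm hsp hsupp _ _ hT
  rw [mem_closedNbhdIn, or_iff_right hi] at hiN
  rw [mem_closedNbhdIn, or_iff_right hj] at hjN
  exact hnadj (hv.2 hiN hjN hij)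

theorem supportedOn_sub_pivotPart (hv : v ∈ S) (hsymm : P.IsSymm) (hsp : Sparse Gr dims P)
    (hsupp : SupportedOn S P) (hA : IsUnit (P.submatrix (Sigma.mk v) (Sigma.mk v)).det) :
    SupportedOn (S.erase v) (P - pivotPart P (Sigma.mk v)) := by
  intro p r hpr
  obtain ⟨hp, hr⟩ :=
    hsupp.sub ((supportedOn_pivotPart hsymm hsp hsupp).mono (closedNbhdIn_subset hv)) p r hpr
  refine ⟨Finset.mem_erase.mpr ⟨fun hpv => hpr ?_, hp⟩,
    Finset.mem_erase.mpr ⟨fun hrv => hpr ?_, hr⟩⟩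
  · obtain ⟨i, a⟩ := p
    obtain rfl : i = v := hpv
    rw [Matrix.sub_apply, pivotPart_apply_left hA, sub_self]
  · obtain ⟨j, b⟩ := r
    obtain rfl : j = v := hrv
    rw [Matrix.sub_apply, pivotPart_apply_right hA, sub_self]

end Elimination

theorem cliqueDecomposable_of_posDefOn {N q : ℕ} {dims : Fin N → ℕ}
    {C : Fin q → Finset (Fin N)} {Gr : SimpleGraph (Fin N)}
    (hch : ∀ (v : Fin N) (c : Gr.Walk v v), c.IsCycle → 4 ≤ c.length → ¬ c.IsChordless)
    (hcl : ∀ s : Finset (Fin N), Gr.IsClique (s : Set (Fin N)) → ∃ k, s ⊆ C k)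
    (S : Finset (Fin N)) {P : Matrix (Idx dims) (Idx dims) ℝ} (hsymm : P.IsSymm)
    (hsp : Sparse Gr dims P) (hsupp : SupportedOn S P) (hpd : PosDefOn S P) :
    CliqueDecomposable dims C P := by
  classical
  induction S using Finset.strongInduction generalizing P with
  | H S ih =>
  rcases S.eq_empty_or_nonempty with rfl | hS
  · obtain rfl : P = 0 := ext fun p r => by_contra fun h => by simpa using (hsupp p r h).1
    exact CliqueDecomposable.zero
  obtain ⟨v, hv⟩ := SimpleGraph.exists_isSimplicialIn hch hS
  have hA : (P.submatrix (Sigma.mk v) (Sigma.mk v)).PosDef :=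
    posDef_submatrix_of_forall_dotProduct_pos sigma_mk_injective hsymm fun x hx hxv =>
      hpd x hx fun p hp => hxv p (by rintro ⟨a, rfl⟩; exact hp hv.1)
  have hAu := (isUnit_iff_isUnit_det _).mp hA.isUnit
  have hT := pivotPart_posSemidef hsymm hA.posSemidef
  obtain ⟨k, hk⟩ := hcl _ hv.isClique_closedNbhdIn
  have hQ := ih _ (Finset.erase_ssubset hv.1)
    (hsymm.sub (isHermitian_iff_isSymm.mp hT.isHermitian))
    (sparse_sub_pivotPart hv hsymm hsp hsupp hAu)
    (supportedOn_sub_pivotPart hv.1 hsymm hsp hsupp hAu)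
    (posDefOn_sub_pivotPart hv.1 hsymm hpd hAu)
  simpa using (cliqueDecomposable_of_supportedOn hT
    ((supportedOn_pivotPart hsymm hsp hsupp).mono hk)).add hQ

theorem exists_cliqueBlkDiag_posDef {N q : ℕ} {dims : Fin N → ℕ}
    {C : Fin q → Finset (Fin N)} {Gr : SimpleGraph (Fin N)}
    (hch : ∀ (v : Fin N) (c : Gr.Walk v v), c.IsCycle → 4 ≤ c.length → ¬ c.IsChordless)
    (hcl : ∀ s : Finset (Fin N), Gr.IsClique (s : Set (Fin N)) → ∃ k, s ⊆ C k)
    {P : Matrix (Idx dims) (Idx dims) ℝ} (hsymm : P.IsSymm) (hsp : Sparse Gr dims P)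
    (hpd : P.PosDef) :
    ∃ Pt : Matrix (CIdx dims C) (CIdx dims C) ℝ,
      CliqueBlkDiag dims C Pt ∧ Pt.PosDef ∧ P = (Emat dims C)ᵀ * Pt * Emat dims C := by
  set E := Emat dims C
  have hEE : (Eᵀ * E).IsSymm := by simp [IsSymm, transpose_mul]
  have hspEE : Sparse Gr dims (Eᵀ * E) := fun i j hij _ _ _ =>
    Emat_transpose_mul_Emat_apply_of_ne fun h => hij (congrArg Sigma.fst h)
  obtain ⟨ε, hε, hpd'⟩ := hpd.exists_posDef_sub_smul (isHermitian_iff_isSymm.mpr hEE)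
  obtain ⟨Pt, hbd, hpsd, heq⟩ := cliqueDecomposable_of_posDefOn (C := C) hch hcl Finset.univ
    (hsymm.sub (hEE.smul ε))
    (fun i j hij hn a b => by
      rw [Matrix.sub_apply, Matrix.smul_apply, hsp i j hij hn a b, hspEE i j hij hn a b,
        smul_zero, sub_zero])
    (fun p r _ => ⟨Finset.mem_univ _, Finset.mem_univ _⟩)
    (fun x hx _ => by simpa only [star_trivial] using hpd'.dotProduct_mulVec_pos hx)
  refine ⟨Pt + ε • 1, fun p r h => ?_, (PosDef.one.smul hε).posSemidef_add hpsd, ?_⟩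
  · rw [Matrix.add_apply, hbd p r h, Matrix.smul_apply, cliqueBlkDiag_one p r h, smul_zero,
      add_zero]
  · rw [Matrix.mul_add, Matrix.add_mul, ← heq, Matrix.mul_smul, Matrix.mul_one,
      Matrix.smul_mul, sub_add_cancel]

theorem IsChordal.not_isChordless {N : ℕ} {Gr : SimpleGraph (Fin N)} (h : IsChordal Gr)
    (v : Fin N) (c : Gr.Walk v v) (hc : c.IsCycle) (hlen : 4 ≤ c.length) : ¬ c.IsChordless :=
  fun hcl => by
    obtain ⟨a, b, ha, hb, hab, he⟩ := h v c hc hlen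
    exact he (hcl.mem_edges ha hb hab)

theorem ListsMaximalCliques.exists_subset {N q : ℕ} {Gr : SimpleGraph (Fin N)}
    {C : Fin q → Finset (Fin N)} (h : ListsMaximalCliques Gr C) {s : Finset (Fin N)}
    (hs : Gr.IsClique (s : Set (Fin N))) : ∃ k, s ⊆ C k := by
  obtain ⟨t, hst, htmax⟩ := Finite.exists_le_maximal (p := fun t : Finset (Fin N) =>
    Gr.IsClique (t : Set (Fin N))) hs
  obtain ⟨k, hk⟩ := h.2 t htmax.1 fun t' ht' htt' => le_antisymm (htmax.2 ht' htt') htt'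
  exact ⟨k, hk ▸ hst⟩

theorem ListsMaximalCliques.exists_mem {N q : ℕ} {Gr : SimpleGraph (Fin N)}
    {C : Fin q → Finset (Fin N)} (h : ListsMaximalCliques Gr C) (i : Fin N) :
    ∃ k, i ∈ C k := by
  simpa using h.exists_subset (s := {i}) (by simp)

/-- Lemma 2, chordal converse (Agler decomposition). -/
theorem stmt3 {N q : ℕ} (Gr : SimpleGraph (Fin N)) (dims : Fin N → ℕ)
    (C : Fin q → Finset (Fin N)) (hch : IsChordal Gr) (hmax : ListsMaximalCliques Gr C)
    (P : Matrix (Idx dims) (Idx dims) ℝ) (hsymm : P.IsSymm) :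
    (Sparse Gr dims P ∧ P.PosDef) ↔
      ∃ Pt : Matrix (CIdx dims C) (CIdx dims C) ℝ,
        CliqueBlkDiag dims C Pt ∧ Pt.PosDef ∧
        P = (Emat dims C)ᵀ * Pt * Emat dims C := by
  constructor
  · rintro ⟨hsp, hpd⟩
    exact exists_cliqueBlkDiag_posDef hch.not_isChordless (fun _ hs => hmax.exists_subset hs)
      hsymm hsp hpd
  · rintro ⟨Pt, hbd, hpd, rfl⟩
    exact ⟨sparse_Emat_transpose_mul_mul (fun k => (hmax.1 k).1) hbd,
      posDef_Emat_transpose_mul_mul hmax.exists_mem hpd⟩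
end

section
/- (Lemma 3) Under Assumption 1, a matrix K ∈ ℝ^{n×n} belongs to 𝒮 if and only if there exists a clique-block-diagonal matrix G̃ = blkdiag(G̃_1,…,G̃_q) with G̃_k ∈ ℝ^{n_{C_k}×n_{C_k}} such that K = EᵀG̃E. -/
open Matrix

/-! The map `G ↦ Eᵀ G E` is linear and sends the matrix unit at `((k, i, a), (k, j, b))` to the
matrix unit at `((i, a), (j, b))`. Hence every sparse `K`, a sum of matrix units whose blocks
`(i, j)` share a clique, is the image of a clique-block-diagonal matrix. Conversely an entry of
`Eᵀ G E` in block `(i, j)` is a sum of entries of `G` in clique blocks `(k, k')` with `i ∈ C k`,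
`j ∈ C k'`; for a clique-block-diagonal `G` only `k = k'` contributes, which forces `i` and `j`
to be adjacent. -/
namespace CIdx

variable {N q : ℕ} {dims : Fin N → ℕ} {C : Fin q → Finset (Fin N)}

def toIdx_s4 (p : CIdx dims C) : Idx dims := ⟨p.2.1.1, p.2.2⟩

lemma mem_of_toIdx_eq {p : CIdx dims C} {i : Fin N} {a : Fin (dims i)}
    (h : p.toIdx_s4 = ⟨i, a⟩) : i ∈ C p.1 := by
  obtain ⟨k, ⟨j, hj⟩, b⟩ := p
  obtain rfl : j = i := congrArg Sigma.fst h
  exact hj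

end CIdx

section CliqueFactorization

variable {N q : ℕ} {dims : Fin N → ℕ} {C : Fin q → Finset (Fin N)}

lemma Emat_apply (p : CIdx dims C) (x : Idx dims) :
    Emat dims C p x = if p.toIdx_s4 = x then 1 else 0 := rfl

lemma Emat_transpose_mul_mul_Emat_apply (G : Matrix (CIdx dims C) (CIdx dims C) ℝ)
    (x y : Idx dims) :
    ((Emat dims C)ᵀ * G * Emat dims C) x y =
      ∑ p, ∑ r, Emat dims C p x * G p r * Emat dims C r y := by
  simp only [mul_apply, transpose_apply, Finset.sum_mul]
  exact Finset.sum_comm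

lemma Emat_transpose_mul_single_mul_Emat (p r : CIdx dims C) (c : ℝ) :
    (Emat dims C)ᵀ * single p r c * Emat dims C = single p.toIdx_s4 r.toIdx_s4 c := by
  ext x y
  rw [Emat_transpose_mul_mul_Emat_apply, Finset.sum_eq_single p, Finset.sum_eq_single r]
  · simp only [single_apply, Emat_apply, and_self, if_true]
    split_ifs <;> simp_all
  · intro r' _ hr'
    simp [Ne.symm hr']
  · simp
  · intro p' _ hp'
    simp [Ne.symm hp']
  · simp

variable (dims C) in
def cliqueBlkDiagSubmodule : Submodule ℝ (Matrix (CIdx dims C) (CIdx dims C) ℝ) where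
  carrier := {X | CliqueBlkDiag dims C X}
  add_mem' hX hY p r hpr := by simp [hX p r hpr, hY p r hpr]
  zero_mem' _ _ _ := rfl
  smul_mem' c X hX p r hpr := by simp [hX p r hpr]

variable (dims C) in
def ematCongr : Matrix (CIdx dims C) (CIdx dims C) ℝ →ₗ[ℝ] Matrix (Idx dims) (Idx dims) ℝ where
  toFun G := (Emat dims C)ᵀ * G * Emat dims C
  map_add' G H := by simp only [Matrix.mul_add, Matrix.add_mul]
  map_smul' c G := by simp

lemma single_mem_map_cliqueBlkDiagSubmodule {i j : Fin N} {k : Fin q} (hi : i ∈ C k)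
    (hj : j ∈ C k) (a : Fin (dims i)) (b : Fin (dims j)) (c : ℝ) :
    single ⟨i, a⟩ ⟨j, b⟩ c ∈ (cliqueBlkDiagSubmodule dims C).map (ematCongr dims C) := by
  refine ⟨single ⟨k, ⟨i, hi⟩, a⟩ ⟨k, ⟨j, hj⟩, b⟩ c, ?_,
    Emat_transpose_mul_single_mul_Emat _ _ c⟩
  intro p r hpr
  simp only [single_apply, ite_eq_right_iff, and_imp]
  rintro rfl rfl
  exact absurd rfl hpr

lemma mem_map_cliqueBlkDiagSubmodule_of_sparse {Gr : SimpleGraph (Fin N)}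
    (hass : Assumption1 Gr C) {K : Matrix (Idx dims) (Idx dims) ℝ} (hK : Sparse Gr dims K) :
    K ∈ (cliqueBlkDiagSubmodule dims C).map (ematCongr dims C) := by
  rw [matrix_eq_sum_single K]
  refine Submodule.sum_mem _ fun ⟨i, a⟩ _ => Submodule.sum_mem _ fun ⟨j, b⟩ _ => ?_
  by_cases hshare : ∃ k, i ∈ C k ∧ j ∈ C k
  · obtain ⟨k, hi, hj⟩ := hshare
    exact single_mem_map_cliqueBlkDiagSubmodule hi hj a b _
  · have hij : i ≠ j := by
      rintro rfl
      obtain ⟨k, hk⟩ := hass.1 i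
      exact hshare ⟨k, hk, hk⟩
    rw [hK i j hij (mt (hass.2 i j hij).mpr hshare), single_zero]
    exact zero_mem _

lemma sparse_Emat_transpose_mul_mul_Emat {Gr : SimpleGraph (Fin N)} (hC : IsCliques Gr C)
    {G : Matrix (CIdx dims C) (CIdx dims C) ℝ} (hG : CliqueBlkDiag dims C G) :
    Sparse Gr dims ((Emat dims C)ᵀ * G * Emat dims C) := by
  intro i j hij hadj a b
  rw [Emat_transpose_mul_mul_Emat_apply]
  refine Finset.sum_eq_zero fun p _ => Finset.sum_eq_zero fun r _ => ?_
  simp only [Emat_apply]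
  split_ifs with hp hr
  · have hpr : p.1 ≠ r.1 := fun hpr =>
      hadj (hC p.1 i (CIdx.mem_of_toIdx_eq hp) j (hpr ▸ CIdx.mem_of_toIdx_eq hr) hij)
    simp [hG p r hpr]
  all_goals simp

end CliqueFactorization

/-- Lemma 3: block-diagonal factorization of sparse matrices. -/
theorem stmt4 {N q : ℕ} (Gr : SimpleGraph (Fin N)) (dims : Fin N → ℕ)
    (C : Fin q → Finset (Fin N)) (hclq : IsCliques Gr C) (hass : Assumption1 Gr C)
    (K : Matrix (Idx dims) (Idx dims) ℝ) :
    Sparse Gr dims K ↔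
      ∃ Gt : Matrix (CIdx dims C) (CIdx dims C) ℝ,
        CliqueBlkDiag dims C Gt ∧ K = (Emat dims C)ᵀ * Gt * Emat dims C := by
  constructor
  · intro hK
    obtain ⟨Gt, hGt, hK⟩ := mem_map_cliqueBlkDiagSubmodule_of_sparse hass hK
    exact ⟨Gt, hGt, hK.symm⟩
  · rintro ⟨Gt, hGt, rfl⟩
    exact sparse_Emat_transpose_mul_mul_Emat hclq hGt
end

section
/- (Finsler's lemma) Let Q = Qᵀ ∈ ℝ^{n×n} and M ∈ ℝ^{m×n} with rank(M) < n, and let M^⊥ be a matrix whose columns form a basis of the kernel of M. Then the following four statements are equivalent: (1) xᵀQx < 0 for all x ∈ ℝ^n with Mx = 0 and x ≠ 0; (2) (M^⊥)ᵀ Q M^⊥ ≺ 0; (3) there exists ρ ∈ ℝ such that Q + ρMᵀM ≺ 0; (4) there exists X ∈ ℝ^{n×m} such that Q + MᵀXᵀ + XM ≺ 0. -/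
open Matrix

/-!
The only substantial implication is (1) ⇒ (3). On the compact set of unit vectors `x` with
`xᵀQx ≥ 0`, none of which lies in `ker M`, the ratio `xᵀQx / |Mx|²` is continuous and hence
bounded above by some `C`, so `ρ = -(C + 1)` makes `xᵀ(Q + ρMᵀM)x < 0` on the whole unit sphere;
both quadratic forms are homogeneous of degree 2, so this extends to all `x ≠ 0`.
The rest is algebra: `X = (ρ/2) Mᵀ` gives (3) ⇒ (4), the cross terms `2 xᵀXMx` vanish on `ker M`
for (4) ⇒ (1), and `Mp` parametrises `ker M` injectively for (1) ⇔ (2).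
-/

section Compactness

theorem IsCompact.exists_forall_add_mul_neg {X : Type*} [TopologicalSpace X] {S : Set X}
    (hS : IsCompact S) {f g : X → ℝ} (hf : Continuous f) (hg : Continuous g)
    (hg_nonneg : ∀ x ∈ S, 0 ≤ g x) (hfg : ∀ x ∈ S, g x = 0 → f x < 0) :
    ∃ ρ : ℝ, ∀ x ∈ S, f x + ρ * g x < 0 := by
  set K := S ∩ {x | 0 ≤ f x}
  have hK : IsCompact K := hS.inter_right (isClosed_le continuous_const hf)
  have hg_pos : ∀ x ∈ K, 0 < g x := fun x hx =>
    (hg_nonneg x hx.1).lt_of_ne fun h => (hfg x hx.1 h.symm).not_ge hx.2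
  obtain ⟨C, hC⟩ := hK.bddAbove_image <|
    hf.continuousOn.div hg.continuousOn fun x hx => (hg_pos x hx).ne'
  refine ⟨-(max C 0 + 1), fun x hx => ?_⟩
  by_cases hfx : 0 ≤ f x
  · have hxK : x ∈ K := ⟨hx, hfx⟩
    have : f x ≤ max C 0 * g x :=
      (div_le_iff₀ (hg_pos x hxK)).mp <| (hC ⟨x, hxK, rfl⟩).trans (le_max_left C 0)
    linarith [hg_pos x hxK]
  · have : -(max C 0 + 1) * g x ≤ 0 :=
      mul_nonpos_of_nonpos_of_nonneg (by linarith [le_max_right C 0]) (hg_nonneg x hx)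
    linarith

theorem exists_forall_add_mul_neg_of_homogeneous {E : Type*} [NormedAddCommGroup E]
    [NormedSpace ℝ E] [ProperSpace E] {f g : E → ℝ} (hf : Continuous f) (hg : Continuous g)
    (hf_smul : ∀ (c : ℝ) x, f (c • x) = c ^ 2 * f x)
    (hg_smul : ∀ (c : ℝ) x, g (c • x) = c ^ 2 * g x)
    (hg_nonneg : ∀ x, 0 ≤ g x) (hfg : ∀ x, x ≠ 0 → g x = 0 → f x < 0) :
    ∃ ρ : ℝ, ∀ x, x ≠ 0 → f x + ρ * g x < 0 := by
  obtain ⟨ρ, hρ⟩ := (isCompact_sphere (0 : E) 1).exists_forall_add_mul_neg hf hg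
    (fun x _ => hg_nonneg x) fun x hx => hfg x (ne_zero_of_mem_unit_sphere ⟨x, hx⟩)
  refine ⟨ρ, fun x hx => ?_⟩
  have hunit : ‖x‖⁻¹ • x ∈ Metric.sphere (0 : E) 1 := by
    simpa using norm_smul_inv_norm (𝕜 := ℝ) hx
  have := hρ _ hunit
  rw [hf_smul, hg_smul, mul_left_comm, ← mul_add] at this
  exact neg_of_mul_neg_right this (sq_nonneg _)

end Compactness

section NegDef

variable {ι κ : Type*} [Fintype ι]

theorem NegDef.dotProduct_mulVec_neg {A : Matrix ι ι ℝ} (hA : NegDef A) {x : ι → ℝ}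
    (hx : x ≠ 0) : x ⬝ᵥ A *ᵥ x < 0 := by
  simpa [neg_mulVec] using hA.dotProduct_mulVec_pos hx

theorem NegDef.of_dotProduct_mulVec_neg {A : Matrix ι ι ℝ} (hA : A.IsSymm)
    (h : ∀ x : ι → ℝ, x ≠ 0 → x ⬝ᵥ A *ᵥ x < 0) : NegDef A :=
  PosDef.of_dotProduct_mulVec_pos (isHermitian_iff_isSymm.mpr hA.neg) fun x hx => by
    simpa [neg_mulVec] using h x hx

theorem Matrix.IsSymm.transpose_mul_mul {Q : Matrix ι ι ℝ} (hQ : Q.IsSymm) (N : Matrix ι κ ℝ) :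
    (Nᵀ * Q * N).IsSymm := by
  simp [IsSymm, transpose_mul, hQ.eq, Matrix.mul_assoc]

theorem dotProduct_transpose_mul_mul_mulVec [Fintype κ] (Q : Matrix ι ι ℝ) (N : Matrix ι κ ℝ)
    (c : κ → ℝ) :
    c ⬝ᵥ (Nᵀ * Q * N) *ᵥ c = (N *ᵥ c) ⬝ᵥ Q *ᵥ (N *ᵥ c) := by
  rw [← mulVec_mulVec, ← mulVec_mulVec, dotProduct_mulVec, vecMul_transpose]

theorem exists_negDef_add_smul_transpose_mul_self [Fintype κ] {Q : Matrix ι ι ℝ} (hQ : Q.IsSymm)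
    (M : Matrix κ ι ℝ) (h : ∀ x : ι → ℝ, M *ᵥ x = 0 → x ≠ 0 → x ⬝ᵥ Q *ᵥ x < 0) :
    ∃ ρ : ℝ, NegDef (Q + ρ • (Mᵀ * M)) := by
  obtain ⟨ρ, hρ⟩ := exists_forall_add_mul_neg_of_homogeneous
    (f := fun x => x ⬝ᵥ Q *ᵥ x) (g := fun x => (M *ᵥ x) ⬝ᵥ (M *ᵥ x))
    (by fun_prop) (by fun_prop)
    (fun c x => by simp only [mulVec_smul, dotProduct_smul, smul_dotProduct, smul_eq_mul]; ring)
    (fun c x => by simp only [mulVec_smul, dotProduct_smul, smul_dotProduct, smul_eq_mul]; ring)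
    (fun x => dotProduct_self_star_nonneg _)
    fun x hx hMx => h x (dotProduct_self_eq_zero.mp hMx) hx
  have hMtM_symm : (Mᵀ * M).IsSymm := by simp [IsSymm, transpose_mul]
  refine ⟨ρ, .of_dotProduct_mulVec_neg (hQ.add (hMtM_symm.smul ρ)) fun x hx => ?_⟩
  have hMtM : x ⬝ᵥ (Mᵀ * M) *ᵥ x = (M *ᵥ x) ⬝ᵥ (M *ᵥ x) := by
    rw [← mulVec_mulVec, dotProduct_mulVec, vecMul_transpose]
  simpa only [add_mulVec, dotProduct_add, smul_mulVec, dotProduct_smul, smul_eq_mul, hMtM]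
    using hρ x hx

theorem negDef_transpose_mul_mul_iff {ν : Type*} [Fintype ν] {Q : Matrix ι ι ℝ} (hQ : Q.IsSymm)
    {M : Matrix κ ι ℝ} {N : Matrix ι ν ℝ} (hN : Function.Injective N.mulVec)
    (hker : ∀ x : ι → ℝ, M *ᵥ x = 0 ↔ ∃ c, N *ᵥ c = x) :
    NegDef (Nᵀ * Q * N) ↔ ∀ x : ι → ℝ, M *ᵥ x = 0 → x ≠ 0 → x ⬝ᵥ Q *ᵥ x < 0 := by
  constructor
  · rintro hneg x hMx hx
    obtain ⟨c, rfl⟩ := (hker x).mp hMx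
    have hc : c ≠ 0 := by rintro rfl; exact hx (mulVec_zero N)
    simpa only [dotProduct_transpose_mul_mul_mulVec] using hneg.dotProduct_mulVec_neg hc
  · refine fun h => .of_dotProduct_mulVec_neg (hQ.transpose_mul_mul N) fun c hc => ?_
    rw [dotProduct_transpose_mul_mul_mulVec]
    exact h _ ((hker _).mpr ⟨c, rfl⟩) (hN.ne_iff' (mulVec_zero N) |>.mpr hc)

theorem dotProduct_mulVec_add_transpose_mul_add_mul_of_mulVec_eq_zero [Fintype κ] (Q : Matrix ι ι ℝ)
    (X : Matrix ι κ ℝ) {M : Matrix κ ι ℝ} {x : ι → ℝ} (hx : M *ᵥ x = 0) :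
    x ⬝ᵥ (Q + Mᵀ * Xᵀ + X * M) *ᵥ x = x ⬝ᵥ Q *ᵥ x := by
  rw [add_mulVec, add_mulVec, ← mulVec_mulVec, ← mulVec_mulVec, dotProduct_add, dotProduct_add,
    dotProduct_mulVec x Mᵀ, vecMul_transpose, hx, zero_dotProduct, mulVec_zero, dotProduct_zero,
    add_zero, add_zero]

end NegDef

theorem stmt5_general {n m r : ℕ} (Q : Matrix (Fin n) (Fin n) ℝ) (hQ : Q.IsSymm)
    (M : Matrix (Fin m) (Fin n) ℝ)
    (Mp : Matrix (Fin n) (Fin r) ℝ)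
    (hspan : ∀ x : Fin n → ℝ, M.mulVec x = 0 ↔ ∃ c : Fin r → ℝ, Mp.mulVec c = x)
    (hindep : LinearIndependent ℝ (fun j : Fin r => Mpᵀ j)) :
    List.TFAE
      [∀ x : Fin n → ℝ, M.mulVec x = 0 → x ≠ 0 → x ⬝ᵥ Q.mulVec x < 0,
       NegDef (Mpᵀ * Q * Mp),
       ∃ ρ : ℝ, NegDef (Q + ρ • (Mᵀ * M)),
       ∃ X : Matrix (Fin n) (Fin m) ℝ, NegDef (Q + Mᵀ * Xᵀ + X * M)] := by
  tfae_have 1 ↔ 2 :=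
    (negDef_transpose_mul_mul_iff hQ (mulVec_injective_iff.mpr hindep) hspan).symm
  tfae_have 1 → 3 := exists_negDef_add_smul_transpose_mul_self hQ M
  tfae_have 3 → 4
  | ⟨ρ, hρ⟩ => ⟨(ρ / 2) • Mᵀ, by
      rwa [transpose_smul, transpose_transpose, Matrix.mul_smul, Matrix.smul_mul, add_assoc,
        ← add_smul, add_halves]⟩
  tfae_have 4 → 1
  | ⟨X, hX⟩, x, hMx, hx => by
    simpa only [dotProduct_mulVec_add_transpose_mul_add_mul_of_mulVec_eq_zero Q X hMx]
      using hX.dotProduct_mulVec_neg hx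
  tfae_finish

/-- Finsler's lemma. -/
theorem stmt5 {n m r : ℕ} (Q : Matrix (Fin n) (Fin n) ℝ) (hQ : Q.IsSymm)
    (M : Matrix (Fin m) (Fin n) ℝ) (hrank : M.rank < n)
    (Mp : Matrix (Fin n) (Fin r) ℝ)
    (hspan : ∀ x : Fin n → ℝ, M.mulVec x = 0 ↔ ∃ c : Fin r → ℝ, Mp.mulVec c = x)
    (hindep : LinearIndependent ℝ (fun j : Fin r => Mpᵀ j)) :
    List.TFAE
      [∀ x : Fin n → ℝ, M.mulVec x = 0 → x ≠ 0 → x ⬝ᵥ Q.mulVec x < 0,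
       NegDef (Mpᵀ * Q * Mp),
       ∃ ρ : ℝ, NegDef (Q + ρ • (Mᵀ * M)),
       ∃ X : Matrix (Fin n) (Fin m) ℝ, NegDef (Q + Mᵀ * Xᵀ + X * M)] :=
  stmt5_general Q hQ M Mp hspan hindep
end

section
/- (Lemma 4, first inclusion) Under Assumption 1, every element of 𝒦_diag belongs to 𝒦_𝒮: if Z ∈ 𝒮 and Q = blkdiag(Q_1,…,Q_N) ≻ 0 satisfy [[Q, (AQ+BZ)ᵀ], [AQ+BZ, Q]] ≻ 0, then the gain ZQ⁻¹ belongs to 𝒦_𝒮. -/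
open Matrix

/-- `Φ(Q̃, Z̃) = [[Q̃, (ÃQ̃+B̃Z̃)ᵀ], [ÃQ̃+B̃Z̃, Q̃]]`. -/
noncomputable def Phi {N q : ℕ} (dims : Fin N → ℕ) (C : Fin q → Finset (Fin N))
    (A B : Matrix (Idx dims) (Idx dims) ℝ)
    (Qt Zt : Matrix (CIdx dims C) (CIdx dims C) ℝ) :
    Matrix (CIdx dims C ⊕ CIdx dims C) (CIdx dims C ⊕ CIdx dims C) ℝ :=
  fromBlocks Qt (tilde dims C A * Qt + tilde dims C B * Zt)ᵀ
    (tilde dims C A * Qt + tilde dims C B * Zt) Qt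

/-!
Let `G = EᵀE`; it is the diagonal matrix counting the cliques through each node. Lift `Q` to the
clique-block-diagonal `Q̃` whose `k`-th block is `G Q` restricted to `C k`, and `Z` to `Z̃` with
entries `cᵢ cⱼ Zᵢⱼ / dᵢⱼ`, where `dᵢⱼ` counts the cliques through both `i` and `j`; sparsity of `Z`
and Assumption 1 make `Zᵢⱼ = 0` whenever `dᵢⱼ = 0`. Then `Q̃ E G⁻¹ = E Q` and `Eᵀ Z̃ E = G Z G`, and
everything follows from these two identities: they give the gain formula directly; they make
`Q̃` commute with the projector `N₀`, so that `N₀Q̃ + Q̃N₀ - ηN₀ = N₀(2Q̃ - η)N₀ ⪰ 0` once `ηI ⪯ Q̃`;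
and with `J = blkdiag(E G⁻¹, E G⁻¹)`, whose range is `ker M`, they give `Jᵀ Φ J` = the given LMI
matrix, so `Φ` is positive definite on `ker M` and Finsler's lemma provides `ρ`.
-/

namespace Matrix

variable {m n : Type*}

lemma dotProduct_mulVec_mulVec_self [Fintype m] [Fintype n] (J : Matrix m n ℝ)
    (M : Matrix m m ℝ) (z : n → ℝ) : (J *ᵥ z) ⬝ᵥ M *ᵥ (J *ᵥ z) = z ⬝ᵥ (Jᵀ * M * J) *ᵥ z := by
  rw [← mulVec_mulVec, ← mulVec_mulVec, dotProduct_mulVec z Jᵀ, vecMul_transpose]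

lemma dotProduct_add_smul_mulVec [Fintype n] (S W : Matrix n n ℝ) (ρ : ℝ) (x : n → ℝ) :
    x ⬝ᵥ (S + ρ • W) *ᵥ x = x ⬝ᵥ S *ᵥ x + ρ * (x ⬝ᵥ W *ᵥ x) := by
  rw [add_mulVec, dotProduct_add, smul_mulVec, dotProduct_smul, smul_eq_mul]

lemma smul_dotProduct_mulVec_smul [Fintype n] (M : Matrix n n ℝ) (c : ℝ) (x : n → ℝ) :
    (c • x) ⬝ᵥ M *ᵥ (c • x) = c * c * (x ⬝ᵥ M *ᵥ x) := by
  rw [mulVec_smul, smul_dotProduct, dotProduct_smul, smul_eq_mul, smul_eq_mul, mul_assoc]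

lemma fromBlocks_transpose_mul_fromBlocks_mul_fromBlocks [Fintype m] {R : Type*} [CommRing R]
    (F : Matrix m n R) (P T : Matrix m m R) :
    (fromBlocks F 0 0 F)ᵀ * fromBlocks P Tᵀ T P * fromBlocks F 0 0 F
      = fromBlocks (Fᵀ * P * F) (Fᵀ * T * F)ᵀ (Fᵀ * T * F) (Fᵀ * P * F) := by
  simp [fromBlocks_transpose, fromBlocks_multiply, transpose_mul, Matrix.mul_assoc]

lemma isHermitian_fromBlocks_transpose {P T : Matrix m m ℝ} (hP : P.IsHermitian) :
    (fromBlocks P Tᵀ T P).IsHermitian :=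
  IsHermitian.fromBlocks hP (by simp) hP

open scoped MatrixOrder in
lemma PosDef.exists_posSemidef_sub_smul_one [Fintype n] [DecidableEq n] {M : Matrix n n ℝ}
    (hM : M.PosDef) : ∃ η : ℝ, 0 < η ∧ (M - η • 1).PosSemidef := by
  cases isEmpty_or_nonempty n
  · exact ⟨1, one_pos, by rw [Subsingleton.elim (M - 1 • 1) 0]; exact .zero⟩
  · obtain ⟨η, hη, hle⟩ := (CFC.exists_pos_algebraMap_le_iff hM.isHermitian.isSelfAdjoint).mpr
      fun x hx => hM.isStrictlyPositive.spectrum_pos hx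
    exact ⟨η, hη, by rwa [Algebra.algebraMap_eq_smul_one, le_iff] at hle⟩

open scoped MatrixOrder in
lemma PosDef.mul_of_commute [Fintype n] [DecidableEq n] {A B : Matrix n n ℝ} (hA : A.PosDef)
    (hB : B.PosDef) (h : Commute A B) : (A * B).PosDef :=
  ((hA.isStrictlyPositive.commute_iff hB.isStrictlyPositive).mp h).posDef

lemma PosSemidef.mul_add_mul_sub_smul_of_commute [Fintype n] [DecidableEq n]
    {N X : Matrix n n ℝ} {η : ℝ} (hN : N.IsHermitian) (hNN : N * N = N) (hNX : Commute N X)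
    (hη : 0 ≤ η) (hX : (X - η • 1).PosSemidef) : (N * X + X * N - η • N).PosSemidef := by
  have hX0 : X.PosSemidef := by simpa using hX.add (PosSemidef.one.smul hη)
  have hNXN : N * X * N = N * X := by
    rw [Matrix.mul_assoc, ← hNX.eq, ← Matrix.mul_assoc, hNN]
  have key : N * X + X * N - η • N = Nᴴ * ((X - η • 1) + X) * N := by
    rw [hN.eq]
    simp only [Matrix.mul_add, Matrix.add_mul, Matrix.mul_sub, Matrix.sub_mul, Matrix.mul_smul,
      Matrix.smul_mul, Matrix.mul_one, hNN, hNXN, ← hNX.eq]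
    abel
  rw [key]
  exact (hX.add hX0).conjTranspose_mul_mul_same N

/-- Finsler's lemma. The open sets `{x | 0 < xᵀ (S + k W) x}` increase with `k` and cover the unit
sphere, so by compactness one of them contains it. -/
lemma exists_posDef_add_smul_of_pos_on_ker [Fintype n] [DecidableEq n] {S W : Matrix n n ℝ}
    (hS : S.IsHermitian) (hW : W.PosSemidef)
    (hker : ∀ x : n → ℝ, x ≠ 0 → W *ᵥ x = 0 → 0 < x ⬝ᵥ S *ᵥ x) :
    ∃ ρ : ℝ, (S + ρ • W).PosDef := by
  have hW0 (x : n → ℝ) : 0 ≤ x ⬝ᵥ W *ᵥ x := by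
    simpa using hW.dotProduct_mulVec_nonneg x
  let U (k : ℕ) : Set (n → ℝ) := {x | 0 < x ⬝ᵥ (S + (k : ℝ) • W) *ᵥ x}
  have hU_open (k : ℕ) : IsOpen (U k) := isOpen_lt continuous_const (by fun_prop)
  have hU_mono : Monotone U := by
    intro k l hkl x hx
    simp only [U, Set.mem_ofPred_eq, dotProduct_add_smul_mulVec] at hx ⊢
    nlinarith [hW0 x, (Nat.cast_le (α := ℝ)).mpr hkl]
  have hcover : Metric.sphere (0 : n → ℝ) 1 ⊆ ⋃ k, U k := by
    intro x hx
    have hx0 : x ≠ 0 := ne_zero_of_mem_sphere (by norm_num) ⟨x, hx⟩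
    simp only [Set.mem_iUnion, U, Set.mem_ofPred_eq, dotProduct_add_smul_mulVec]
    rcases (hW0 x).eq_or_lt with hw | hw
    · have hWx : W *ᵥ x = 0 := (hW.dotProduct_mulVec_zero_iff x).mp (by simpa using hw.symm)
      exact ⟨0, by simpa using hker x hx0 hWx⟩
    · obtain ⟨k, hk⟩ := exists_nat_gt (-(x ⬝ᵥ S *ᵥ x) / x ⬝ᵥ W *ᵥ x)
      exact ⟨k, by rw [div_lt_iff₀ hw] at hk; linarith⟩
  obtain ⟨k, hk⟩ := (isCompact_sphere (0 : n → ℝ) 1).elim_directed_cover U hU_open hcover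
    hU_mono.directed_le
  refine ⟨k, .of_dotProduct_mulVec_pos (hS.add (hW.isHermitian.smul (.all _))) fun x hx => ?_⟩
  have hnx : 0 < ‖x‖ := norm_pos_iff.mpr hx
  have hu : ‖x‖⁻¹ • x ∈ Metric.sphere (0 : n → ℝ) 1 := by
    simp [norm_smul, hnx.ne']
  have := hk hu
  simp only [U, Set.mem_ofPred_eq, smul_dotProduct_mulVec_smul] at this
  simpa using pos_of_mul_pos_right this (by positivity)

end Matrix

section Cliques

open scoped Kronecker Finset

variable {N q : ℕ} {dims : Fin N → ℕ} {C : Fin q → Finset (Fin N)}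

local notation "𝐄" => Emat dims C
local notation "𝐆" => (Emat dims C)ᵀ * Emat dims C

def CIdx.node (p : CIdx dims C) : Idx dims := ⟨p.2.1.1, p.2.2⟩

lemma CIdx.node_fst_mem (p : CIdx dims C) : p.node.1 ∈ C p.1 := p.2.1.2

def cliqueCount (C : Fin q → Finset (Fin N)) (i : Fin N) : ℕ := #{k | i ∈ C k}

def pairCount (C : Fin q → Finset (Fin N)) (i j : Fin N) : ℕ := #{k | i ∈ C k ∧ j ∈ C k}

lemma sum_ite_node_eq (t : Idx dims) (F : CIdx dims C → ℝ) :
    ∑ p : CIdx dims C, (if p.node = t then F p else 0)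
      = ∑ k, if h : t.1 ∈ C k then F ⟨k, ⟨t.1, h⟩, t.2⟩ else 0 := by
  rw [Fintype.sum_sigma]
  refine Finset.sum_congr rfl fun k _ => ?_
  split_ifs with h
  · rw [Fintype.sum_eq_single ⟨⟨t.1, h⟩, t.2⟩]
    · simp [CIdx.node]
    · rintro ⟨⟨j, hj⟩, a⟩ hne
      refine if_neg fun heq => hne ?_
      obtain ⟨t1, t2⟩ := t
      simp only [CIdx.node, Sigma.mk.injEq] at heq
      obtain ⟨rfl, h2⟩ := heq
      simp [eq_of_heq h2]
  · refine Fintype.sum_eq_zero _ fun x => if_neg fun heq => h ?_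
    rw [← heq]
    exact x.1.2

lemma Emat_mul_apply {m : Type*} (X : Matrix (Idx dims) m ℝ) (p : CIdx dims C) (r : m) :
    (𝐄 * X) p r = X p.node r := by
  simp [mul_apply, Emat, CIdx.node]

lemma Emat_transpose_mul_apply {m : Type*} (Y : Matrix (CIdx dims C) m ℝ) (t : Idx dims)
    (r : m) : (𝐄ᵀ * Y) t r = ∑ k, if h : t.1 ∈ C k then Y ⟨k, ⟨t.1, h⟩, t.2⟩ r else 0 := by
  simp only [mul_apply, transpose_apply, Emat, ite_mul, one_mul, zero_mul]
  exact sum_ite_node_eq t _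

lemma mul_Emat_apply {m : Type*} (Y : Matrix m (CIdx dims C) ℝ) (r : m) (u : Idx dims) :
    (Y * 𝐄) r u = ∑ k, if h : u.1 ∈ C k then Y r ⟨k, ⟨u.1, h⟩, u.2⟩ else 0 := by
  simp only [mul_apply, Emat, mul_ite, mul_one, mul_zero]
  exact sum_ite_node_eq u _

lemma injective_fst_node : Function.Injective fun p : CIdx dims C => (p.1, p.node) := by
  rintro ⟨k, ⟨j, hj⟩, a⟩ ⟨k', ⟨j', hj'⟩, a'⟩ h
  simp only [CIdx.node, Prod.mk.injEq, Sigma.mk.injEq] at h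
  obtain ⟨rfl, rfl, h⟩ := h
  simp [eq_of_heq h]

variable (C) in
/-- The clique-block-diagonal matrix whose `k`-th block is the principal submatrix of `W` on the
nodes of `C k`. -/
def cliqueLift (W : Matrix (Idx dims) (Idx dims) ℝ) : Matrix (CIdx dims C) (CIdx dims C) ℝ :=
  ((1 : Matrix (Fin q) (Fin q) ℝ) ⊗ₖ W).submatrix (fun p => (p.1, p.node)) fun p => (p.1, p.node)

lemma cliqueLift_apply (W : Matrix (Idx dims) (Idx dims) ℝ) (p r : CIdx dims C) :
    cliqueLift C W p r = if p.1 = r.1 then W p.node r.node else 0 := by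
  simp [cliqueLift, one_apply]

lemma cliqueBlkDiag_cliqueLift (W : Matrix (Idx dims) (Idx dims) ℝ) :
    CliqueBlkDiag dims C (cliqueLift C W) := fun p r h => by
  rw [cliqueLift_apply, if_neg h]

lemma Matrix.PosDef.cliqueLift {W : Matrix (Idx dims) (Idx dims) ℝ} (hW : W.PosDef) :
    (cliqueLift C W).PosDef :=
  (PosDef.one.kronecker hW).submatrix injective_fst_node

lemma cliqueLift_one : cliqueLift C (1 : Matrix (Idx dims) (Idx dims) ℝ) = 1 := by
  rw [cliqueLift, one_kronecker_one, submatrix_one _ injective_fst_node]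

lemma cliqueLift_mul_Emat_apply (W : Matrix (Idx dims) (Idx dims) ℝ) (p : CIdx dims C)
    (u : Idx dims) : (cliqueLift C W * 𝐄) p u = if u.1 ∈ C p.1 then W p.node u else 0 := by
  rw [mul_Emat_apply, Fintype.sum_eq_single p.1]
  · simp [cliqueLift_apply, CIdx.node]
  · intro k hk
    simp [cliqueLift_apply, Ne.symm hk]

lemma cliqueLift_mul_Emat {W : Matrix (Idx dims) (Idx dims) ℝ} (hW : BlkDiag dims W) :
    cliqueLift C W * 𝐄 = 𝐄 * W := by
  ext p u
  rw [cliqueLift_mul_Emat_apply, Emat_mul_apply, ite_eq_left_iff]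
  exact fun hu => (hW _ _ fun h => hu (h ▸ p.node_fst_mem)).symm

lemma Emat_transpose_mul_cliqueLift_mul_Emat (W : Matrix (Idx dims) (Idx dims) ℝ) :
    𝐄ᵀ * cliqueLift C W * 𝐄 = of fun t u => (pairCount C t.1 u.1 : ℝ) * W t u := by
  ext t u
  rw [Matrix.mul_assoc, Emat_transpose_mul_apply]
  simp only [cliqueLift_mul_Emat_apply, of_apply, pairCount, Finset.card_filter, Nat.cast_sum,
    Finset.sum_mul]
  refine Finset.sum_congr rfl fun k _ => ?_
  by_cases ht : t.1 ∈ C k <;> by_cases hu : u.1 ∈ C k <;> simp [ht, hu, CIdx.node]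

lemma Emat_transpose_mul_Emat : 𝐆 = diagonal fun t => (cliqueCount C t.1 : ℝ) := by
  have h := Emat_transpose_mul_cliqueLift_mul_Emat (C := C) (1 : Matrix (Idx dims) (Idx dims) ℝ)
  rw [cliqueLift_one, Matrix.mul_one] at h
  rw [h]
  ext t u
  by_cases htu : t = u
  · simp [htu, pairCount, cliqueCount]
  · simp [htu, one_apply_ne]

lemma cliqueCount_pos (hcov : ∀ i, ∃ k, i ∈ C k) (i : Fin N) : 0 < cliqueCount C i := by
  obtain ⟨k, hk⟩ := hcov i
  exact Finset.card_pos.mpr ⟨k, by simpa using hk⟩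

lemma posDef_Emat_transpose_mul_Emat (hcov : ∀ i, ∃ k, i ∈ C k) : 𝐆.PosDef := by
  rw [Emat_transpose_mul_Emat, posDef_diagonal_iff]
  exact fun t => Nat.cast_pos.mpr (cliqueCount_pos hcov t.1)

lemma BlkDiag.commute_diagonal {W : Matrix (Idx dims) (Idx dims) ℝ} (hW : BlkDiag dims W)
    (d : Fin N → ℝ) : Commute (diagonal fun t : Idx dims => d t.1) W := by
  ext t u
  rw [diagonal_mul, mul_diagonal]
  by_cases h : t.1 = u.1
  · rw [h, mul_comm]
  · rw [hW t u h, mul_zero, zero_mul]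

lemma BlkDiag.diagonal_mul {W : Matrix (Idx dims) (Idx dims) ℝ} (hW : BlkDiag dims W)
    (d : Idx dims → ℝ) : BlkDiag dims (diagonal d * W) := fun t u h => by
  rw [Matrix.diagonal_mul, hW t u h, mul_zero]

lemma BlkDiag.commute_Emat_transpose_mul_Emat {W : Matrix (Idx dims) (Idx dims) ℝ}
    (hW : BlkDiag dims W) : Commute 𝐆 W := by
  rw [Emat_transpose_mul_Emat]
  exact hW.commute_diagonal fun i => (cliqueCount C i : ℝ)

lemma posDef_cliqueLift_Emat_transpose_mul_Emat_mul {Q : Matrix (Idx dims) (Idx dims) ℝ}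
    (hcov : ∀ i, ∃ k, i ∈ C k) (hQb : BlkDiag dims Q) (hQ : Q.PosDef) :
    (cliqueLift C (𝐆 * Q)).PosDef :=
  ((posDef_Emat_transpose_mul_Emat hcov).mul_of_commute hQ
    hQb.commute_Emat_transpose_mul_Emat).cliqueLift

lemma cliqueLift_Emat_transpose_mul_Emat_mul_mul_Emat_mul_inv {Q : Matrix (Idx dims) (Idx dims) ℝ}
    (hE : IsUnit 𝐆.det) (hQb : BlkDiag dims Q) : cliqueLift C (𝐆 * Q) * (𝐄 * 𝐆⁻¹) = 𝐄 * Q := by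
  have hGQ : BlkDiag dims (𝐆 * Q) := by
    rw [Emat_transpose_mul_Emat]
    exact hQb.diagonal_mul _
  rw [← Matrix.mul_assoc, cliqueLift_mul_Emat hGQ, hQb.commute_Emat_transpose_mul_Emat.eq,
    Matrix.mul_assoc, Matrix.mul_assoc, mul_nonsing_inv _ hE, Matrix.mul_one]

variable (C) in
/-- Where no clique contains both `t.1` and `u.1`, division by zero makes the entry `0`. -/
noncomputable def pairScaled (Z : Matrix (Idx dims) (Idx dims) ℝ) :
    Matrix (Idx dims) (Idx dims) ℝ :=
  of fun t u => cliqueCount C t.1 * cliqueCount C u.1 / pairCount C t.1 u.1 * Z t u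

lemma Sparse.apply_eq_zero_of_pairCount_eq_zero {Gr : SimpleGraph (Fin N)}
    {Z : Matrix (Idx dims) (Idx dims) ℝ} (hass : Assumption1 Gr C) (hZ : Sparse Gr dims Z)
    {t u : Idx dims} (h : pairCount C t.1 u.1 = 0) : Z t u = 0 := by
  have hshare : ¬ ∃ k, t.1 ∈ C k ∧ u.1 ∈ C k := fun ⟨k, hk⟩ =>
    (Finset.card_pos.mpr ⟨k, by simpa using hk⟩).ne' h
  have hne : t.1 ≠ u.1 := fun htu => by
    obtain ⟨k, hk⟩ := hass.1 t.1
    exact hshare ⟨k, hk, htu ▸ hk⟩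
  exact hZ t.1 u.1 hne (fun hadj => hshare ((hass.2 _ _ hne).mpr hadj)) t.2 u.2

lemma Emat_transpose_mul_cliqueLift_pairScaled_mul_Emat {Gr : SimpleGraph (Fin N)}
    {Z : Matrix (Idx dims) (Idx dims) ℝ} (hass : Assumption1 Gr C) (hZ : Sparse Gr dims Z) :
    𝐄ᵀ * cliqueLift C (pairScaled C Z) * 𝐄 = 𝐆 * Z * 𝐆 := by
  rw [Emat_transpose_mul_cliqueLift_mul_Emat, Emat_transpose_mul_Emat]
  ext t u
  simp only [pairScaled, of_apply, Matrix.diagonal_mul, mul_diagonal]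
  by_cases h : pairCount C t.1 u.1 = 0
  · simp [hZ.apply_eq_zero_of_pairCount_eq_zero hass h]
  · field_simp

variable {Qt Zt : Matrix (CIdx dims C) (CIdx dims C) ℝ} {Q Z : Matrix (Idx dims) (Idx dims) ℝ}

lemma Emat_transpose_mul_mul_inv (hE : IsUnit 𝐆.det) : 𝐄ᵀ * (𝐄 * 𝐆⁻¹) = 1 := by
  rw [← Matrix.mul_assoc, mul_nonsing_inv _ hE]

lemma projection_transpose : (𝐄 * 𝐆⁻¹ * 𝐄ᵀ)ᵀ = 𝐄 * 𝐆⁻¹ * 𝐄ᵀ := by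
  rw [transpose_mul, transpose_mul, transpose_transpose, transpose_nonsing_inv, transpose_mul,
    transpose_transpose, Matrix.mul_assoc]

lemma projection_mul_projection (hE : IsUnit 𝐆.det) :
    𝐄 * 𝐆⁻¹ * 𝐄ᵀ * (𝐄 * 𝐆⁻¹ * 𝐄ᵀ) = 𝐄 * 𝐆⁻¹ * 𝐄ᵀ := by
  rw [Matrix.mul_assoc (𝐄 * 𝐆⁻¹) 𝐄ᵀ, ← Matrix.mul_assoc 𝐄ᵀ, Emat_transpose_mul_mul_inv hE,
    Matrix.one_mul]

lemma N0_isHermitian : (N0 dims C).IsHermitian := by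
  rw [IsHermitian, conjTranspose_eq_transpose_of_trivial, N0, transpose_sub, transpose_one,
    projection_transpose]

lemma N0_mul_N0 (hE : IsUnit 𝐆.det) : N0 dims C * N0 dims C = N0 dims C := by
  rw [N0, Matrix.sub_mul, Matrix.one_mul, Matrix.mul_sub, Matrix.mul_one,
    projection_mul_projection hE, sub_self, sub_zero]

lemma Mmat_posSemidef (hE : IsUnit 𝐆.det) : (Mmat dims C).PosSemidef := by
  have h : (Mmat dims C)ᴴ * Mmat dims C = Mmat dims C := by
    rw [Mmat, fromBlocks_conjTranspose, fromBlocks_multiply, N0_isHermitian.eq, N0_mul_N0 hE]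
    simp
  exact h ▸ posSemidef_conjTranspose_mul_self _

lemma eq_mulVec_of_Mmat_mulVec_eq_zero {x : CIdx dims C ⊕ CIdx dims C → ℝ}
    (hx : Mmat dims C *ᵥ x = 0) :
    x = fromBlocks (𝐄 * 𝐆⁻¹) 0 0 (𝐄 * 𝐆⁻¹) *ᵥ (fromBlocks 𝐄ᵀ 0 0 𝐄ᵀ *ᵥ x) := by
  have hM : Mmat dims C = 1 - fromBlocks (𝐄 * 𝐆⁻¹) 0 0 (𝐄 * 𝐆⁻¹) * fromBlocks 𝐄ᵀ 0 0 𝐄ᵀ := by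
    rw [Mmat, N0, fromBlocks_multiply]
    ext (i | i) (j | j) <;> simp [one_apply]
  rwa [hM, sub_mulVec, one_mulVec, sub_eq_zero, ← mulVec_mulVec] at hx

lemma commute_N0 (hQ : Qt * (𝐄 * 𝐆⁻¹) = 𝐄 * Q) (hQt : Qtᵀ = Qt) (hQs : Qᵀ = Q) :
    Commute (N0 dims C) Qt := by
  have hQtP : Qt * (𝐄 * 𝐆⁻¹ * 𝐄ᵀ) = 𝐄 * Q * 𝐄ᵀ := by rw [← Matrix.mul_assoc, hQ]
  have hPQt : Commute (𝐄 * 𝐆⁻¹ * 𝐄ᵀ) Qt := calc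
    𝐄 * 𝐆⁻¹ * 𝐄ᵀ * Qt = (Qt * (𝐄 * 𝐆⁻¹ * 𝐄ᵀ))ᵀ := by
      rw [transpose_mul, projection_transpose, hQt]
    _ = Qt * (𝐄 * 𝐆⁻¹ * 𝐄ᵀ) := by
      rw [hQtP, transpose_mul, transpose_mul, transpose_transpose, hQs, Matrix.mul_assoc]
  exact (Commute.one_left Qt).sub_left hPQt

lemma exists_N0_mul_add_mul_sub_smul_posSemidef (hE : IsUnit 𝐆.det)
    (hQ : Qt * (𝐄 * 𝐆⁻¹) = 𝐄 * Q) (hQt : Qt.PosDef) (hQs : Qᵀ = Q) :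
    ∃ η : ℝ, 0 < η ∧ (N0 dims C * Qt + Qt * N0 dims C - η • N0 dims C).PosSemidef := by
  obtain ⟨η, hη, hQη⟩ := hQt.exists_posSemidef_sub_smul_one
  have hQtT : Qtᵀ = Qt := by simpa using hQt.isHermitian.eq
  exact ⟨η, hη, hQη.mul_add_mul_sub_smul_of_commute N0_isHermitian (N0_mul_N0 hE)
    (commute_N0 hQ hQtT hQs) hη.le⟩

lemma gainCl_eq (hE : IsUnit 𝐆.det) (hQ : Qt * (𝐄 * 𝐆⁻¹) = 𝐄 * Q)
    (hZ : 𝐄ᵀ * Zt * 𝐄 = 𝐆 * Z * 𝐆) (hQt : IsUnit Qt.det) (hQdet : IsUnit Q.det) :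
    gainCl dims C Zt Qt = Z * Q⁻¹ := by
  have hQtE : Qt⁻¹ * 𝐄 = 𝐄 * 𝐆⁻¹ * Q⁻¹ := calc
    Qt⁻¹ * 𝐄 = Qt⁻¹ * (𝐄 * Q) * Q⁻¹ := by
      rw [Matrix.mul_assoc, Matrix.mul_assoc 𝐄, mul_nonsing_inv _ hQdet, Matrix.mul_one]
    _ = 𝐄 * 𝐆⁻¹ * Q⁻¹ := by
      rw [← hQ, ← Matrix.mul_assoc, nonsing_inv_mul _ hQt, Matrix.one_mul]
  calc gainCl dims C Zt Qt = 𝐆⁻¹ * (𝐄ᵀ * Zt * 𝐄) * 𝐆⁻¹ * Q⁻¹ := by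
        rw [gainCl, Matrix.mul_assoc _ Qt⁻¹, hQtE]
        simp only [Matrix.mul_assoc]
    _ = Z * Q⁻¹ := by
        rw [hZ, ← Matrix.mul_assoc 𝐆⁻¹ (𝐆 * Z), ← Matrix.mul_assoc 𝐆⁻¹ 𝐆,
          nonsing_inv_mul _ hE, Matrix.one_mul, Matrix.mul_assoc Z, mul_nonsing_inv _ hE,
          Matrix.mul_one]

lemma tilde_mul_mul_Emat_mul_inv (hE : IsUnit 𝐆.det) (X : Matrix (Idx dims) (Idx dims) ℝ)
    {Y : Matrix (CIdx dims C) (CIdx dims C) ℝ} {W : Matrix (Idx dims) (Idx dims) ℝ}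
    (hY : 𝐄ᵀ * Y * (𝐄 * 𝐆⁻¹) = 𝐆 * W) :
    tilde dims C X * Y * (𝐄 * 𝐆⁻¹) = 𝐄 * (X * W) := calc
  tilde dims C X * Y * (𝐄 * 𝐆⁻¹) = 𝐄 * X * 𝐆⁻¹ * (𝐄ᵀ * Y * (𝐄 * 𝐆⁻¹)) := by
      simp only [tilde, Matrix.mul_assoc]
  _ = 𝐄 * (X * W) := by
      rw [hY, ← Matrix.mul_assoc, Matrix.mul_assoc _ 𝐆⁻¹, nonsing_inv_mul _ hE, Matrix.mul_one,
        Matrix.mul_assoc]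

lemma tilde_mul_add_tilde_mul_mul_Emat_mul_inv (hE : IsUnit 𝐆.det)
    (hQ : Qt * (𝐄 * 𝐆⁻¹) = 𝐄 * Q) (hZ : 𝐄ᵀ * Zt * 𝐄 = 𝐆 * Z * 𝐆)
    (A B : Matrix (Idx dims) (Idx dims) ℝ) :
    (tilde dims C A * Qt + tilde dims C B * Zt) * (𝐄 * 𝐆⁻¹) = 𝐄 * (A * Q + B * Z) := by
  have hQ' : 𝐄ᵀ * Qt * (𝐄 * 𝐆⁻¹) = 𝐆 * Q := by
    rw [Matrix.mul_assoc, hQ, Matrix.mul_assoc]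
  have hZ' : 𝐄ᵀ * Zt * (𝐄 * 𝐆⁻¹) = 𝐆 * Z := by
    rw [← Matrix.mul_assoc, hZ, Matrix.mul_assoc, mul_nonsing_inv _ hE, Matrix.mul_one]
  rw [Matrix.add_mul, tilde_mul_mul_Emat_mul_inv hE A hQ', tilde_mul_mul_Emat_mul_inv hE B hZ',
    Matrix.mul_add]

lemma exists_posDef_Phi_add_smul_Mmat (hE : IsUnit 𝐆.det) (hQ : Qt * (𝐄 * 𝐆⁻¹) = 𝐄 * Q)
    (hZ : 𝐄ᵀ * Zt * 𝐄 = 𝐆 * Z * 𝐆) (hQt : Qt.IsHermitian) (A B : Matrix (Idx dims) (Idx dims) ℝ)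
    (hLMI : (fromBlocks Q (A * Q + B * Z)ᵀ (A * Q + B * Z) Q).PosDef) :
    ∃ ρ : ℝ, (Phi dims C A B Qt Zt + ρ • Mmat dims C).PosDef := by
  have hFE : (𝐄 * 𝐆⁻¹)ᵀ * 𝐄 = 1 := by
    rw [← transpose_transpose 𝐄, ← transpose_mul, transpose_transpose,
      Emat_transpose_mul_mul_inv hE, transpose_one]
  have hJ : (fromBlocks (𝐄 * 𝐆⁻¹) 0 0 (𝐄 * 𝐆⁻¹))ᵀ * Phi dims C A B Qt Zt *
      fromBlocks (𝐄 * 𝐆⁻¹) 0 0 (𝐄 * 𝐆⁻¹)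
        = fromBlocks Q (A * Q + B * Z)ᵀ (A * Q + B * Z) Q := by
    rw [Phi, fromBlocks_transpose_mul_fromBlocks_mul_fromBlocks, Matrix.mul_assoc _ Qt, hQ,
      Matrix.mul_assoc _ (_ + _), tilde_mul_add_tilde_mul_mul_Emat_mul_inv hE hQ hZ,
      ← Matrix.mul_assoc, ← Matrix.mul_assoc, hFE, Matrix.one_mul, Matrix.one_mul]
  refine exists_posDef_add_smul_of_pos_on_ker (isHermitian_fromBlocks_transpose hQt)
    (Mmat_posSemidef hE) fun x hx hMx => ?_
  have hz : fromBlocks 𝐄ᵀ 0 0 𝐄ᵀ *ᵥ x ≠ 0 := fun hz => by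
    rw [eq_mulVec_of_Mmat_mulVec_eq_zero hMx, hz, mulVec_zero] at hx
    exact hx rfl
  rw [eq_mulVec_of_Mmat_mulVec_eq_zero hMx, dotProduct_mulVec_mulVec_self, hJ]
  simpa using hLMI.dotProduct_mulVec_pos hz

end Cliques

theorem stmt6_general {N q : ℕ} (Gr : SimpleGraph (Fin N)) (dims : Fin N → ℕ)
    (C : Fin q → Finset (Fin N)) (hass : Assumption1 Gr C)
    (A B : Matrix (Idx dims) (Idx dims) ℝ)
    (Z Qm : Matrix (Idx dims) (Idx dims) ℝ)
    (hZ : Sparse Gr dims Z) (hQbd : BlkDiag dims Qm) (hQpd : Qm.PosDef)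
    (hLMI : (fromBlocks Qm (A * Qm + B * Z)ᵀ (A * Qm + B * Z) Qm).PosDef) :
    ∃ (Zt Qt : Matrix (CIdx dims C) (CIdx dims C) ℝ) (ρ η : ℝ),
      CliqueBlkDiag dims C Zt ∧ CliqueBlkDiag dims C Qt ∧ Qt.PosDef ∧ 0 < η ∧
      (Phi dims C A B Qt Zt + ρ • Mmat dims C).PosDef ∧
      (N0 dims C * Qt + Qt * N0 dims C - η • N0 dims C).PosSemidef ∧
      Z * Qm⁻¹ = gainCl dims C Zt Qt := by
  have hE := (posDef_Emat_transpose_mul_Emat (dims := dims) hass.1).det_pos.ne'.isUnit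
  have hQt := posDef_cliqueLift_Emat_transpose_mul_Emat_mul hass.1 hQbd hQpd
  have hQ := cliqueLift_Emat_transpose_mul_Emat_mul_mul_Emat_mul_inv (C := C) hE hQbd
  have hZ' := Emat_transpose_mul_cliqueLift_pairScaled_mul_Emat hass hZ
  obtain ⟨η, hη, hN0⟩ :=
    exists_N0_mul_add_mul_sub_smul_posSemidef hE hQ hQt (by simpa using hQpd.isHermitian.eq)
  obtain ⟨ρ, hρ⟩ := exists_posDef_Phi_add_smul_Mmat hE hQ hZ' hQt.isHermitian A B hLMI
  exact ⟨_, _, ρ, η, cliqueBlkDiag_cliqueLift _, cliqueBlkDiag_cliqueLift _, hQt, hη, hρ, hN0,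
    (gainCl_eq hE hQ hZ' hQt.det_pos.ne'.isUnit hQpd.det_pos.ne'.isUnit).symm⟩

/-- Lemma 4, first inclusion: `𝒦_diag ⊆ 𝒦_𝒮`. -/
theorem stmt6 {N q : ℕ} (Gr : SimpleGraph (Fin N)) (dims : Fin N → ℕ)
    (C : Fin q → Finset (Fin N)) (hclq : IsCliques Gr C) (hass : Assumption1 Gr C)
    (A B : Matrix (Idx dims) (Idx dims) ℝ)
    (Z Qm : Matrix (Idx dims) (Idx dims) ℝ)
    (hZ : Sparse Gr dims Z) (hQbd : BlkDiag dims Qm) (hQpd : Qm.PosDef)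
    (hLMI : (fromBlocks Qm (A * Qm + B * Z)ᵀ (A * Qm + B * Z) Qm).PosDef) :
    ∃ (Zt Qt : Matrix (CIdx dims C) (CIdx dims C) ℝ) (ρ η : ℝ),
      CliqueBlkDiag dims C Zt ∧ CliqueBlkDiag dims C Qt ∧ Qt.PosDef ∧ 0 < η ∧
      (Phi dims C A B Qt Zt + ρ • Mmat dims C).PosDef ∧
      (N0 dims C * Qt + Qt * N0 dims C - η • N0 dims C).PosSemidef ∧
      Z * Qm⁻¹ = gainCl dims C Zt Qt :=
  stmt6_general Gr dims C hass A B Z Qm hZ hQbd hQpd hLMI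
end

section
/- (Lemma 4, second inclusion) Under Assumption 1, 𝒦_𝒮 ⊆ 𝒦̂_𝒮: if Z̃ and Q̃ are clique-block-diagonal with Q̃ ≻ 0 and there exist ρ ∈ ℝ and η > 0 with Φ(Q̃,Z̃) + ρM ≻ 0 and N₀Q̃ + Q̃N₀ ⪰ ηN₀, then there exists β ∈ ℝ such that blkdiag(Q̃,Q̃)⁻¹ Φ(Q̃,Z̃) blkdiag(Q̃,Q̃)⁻¹ + βM ≻ 0; in particular the gain (EᵀE)⁻¹Eᵀ Z̃ Q̃⁻¹ E belongs to 𝒦̂_𝒮. -/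
open Matrix

/-!
`N₀` is an orthogonal projection, so `(Q̃ - η/2) N₀ (Q̃ - η/2) ⪰ 0`; adding `η/2` times the
hypothesis `N₀Q̃ + Q̃N₀ ⪰ ηN₀` gives `Q̃N₀Q̃ ⪰ (η²/4) N₀`, i.e. `RMR ⪰ (η²/4) M` for
`R = blkdiag(Q̃, Q̃)`. Hence `ρM ⪯ βRMR` with `β = max(ρ, 0) / (η²/4)`, so `Φ + βRMR ≻ 0`, and the
congruence by `R⁻¹` turns this into `R⁻¹ΦR⁻¹ + βM ≻ 0`. The same `Z̃, Q̃, β` witness the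
membership of the gain in `𝒦̂_𝒮`.
-/

open scoped ComplexOrder

namespace Matrix
variable {m n 𝕜 : Type*} [RCLike 𝕜]

theorem PosSemidef.smul_sub_smul_of_sub_smul {P S : Matrix n n 𝕜} {c : ℝ}
    (hP : P.PosSemidef) (hc : 0 < c) (h : (S - c • P).PosSemidef) (ρ : ℝ) :
    ((max ρ 0 / c) • S - ρ • P).PosSemidef := by
  have key : (max ρ 0 / c) • S - ρ • P = (max ρ 0 / c) • (S - c • P) + (max ρ 0 - ρ) • P := by
    rw [smul_sub, smul_smul, div_mul_cancel₀ _ hc.ne']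
    module
  rw [key]
  exact (h.smul (by positivity)).add (hP.smul (sub_nonneg.2 (le_max_left _ _)))

variable [Fintype m] [Fintype n]

-- For singular `A` the junk value `A⁻¹ = 0` satisfies this too, so `E (EᴴE)⁻¹ Eᴴ` below is
-- idempotent for every `E`.
theorem nonsing_inv_mul_mul_nonsing_inv [DecidableEq n] (A : Matrix n n 𝕜) :
    A⁻¹ * A * A⁻¹ = A⁻¹ := by
  by_cases hA : IsUnit A.det
  · rw [nonsing_inv_mul _ hA, one_mul]
  · simp [nonsing_inv_apply_not_isUnit _ hA]

theorem posSemidef_one_sub_mul_inv_mul [DecidableEq m] [DecidableEq n] (E : Matrix m n 𝕜) :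
    (1 - E * (Eᴴ * E)⁻¹ * Eᴴ).PosSemidef := by
  set P := 1 - E * (Eᴴ * E)⁻¹ * Eᴴ
  have hP : Pᴴ = P := by
    simp [P, conjTranspose_nonsing_inv, Matrix.mul_assoc]
  have hproj : E * (Eᴴ * E)⁻¹ * Eᴴ * (E * (Eᴴ * E)⁻¹ * Eᴴ) = E * (Eᴴ * E)⁻¹ * Eᴴ :=
    calc _ = E * ((Eᴴ * E)⁻¹ * (Eᴴ * E) * (Eᴴ * E)⁻¹) * Eᴴ := by simp only [Matrix.mul_assoc]
      _ = _ := by rw [nonsing_inv_mul_mul_nonsing_inv]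
  have hPP : P * P = P := by
    simp only [P, sub_mul, mul_sub, one_mul, mul_one, hproj]
    abel
  simpa [hP, hPP] using posSemidef_conjTranspose_mul_self P

theorem PosSemidef.fromBlocks_zero {A : Matrix m m 𝕜} {D : Matrix n n 𝕜}
    (hA : A.PosSemidef) (hD : D.PosSemidef) : (fromBlocks A 0 0 D).PosSemidef := by
  rw [posSemidef_iff_dotProduct_mulVec] at hA hD ⊢
  refine ⟨by simp [IsHermitian, fromBlocks_conjTranspose, hA.1.eq, hD.1.eq], fun x => ?_⟩
  have := add_nonneg (hA.2 (x ∘ Sum.inl)) (hD.2 (x ∘ Sum.inr))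
  simpa [dotProduct, Fintype.sum_sum_type, fromBlocks_mulVec] using this

theorem PosSemidef.mul_mul_sub_smul_of_anticommutator {P Q : Matrix n n 𝕜} {η : ℝ}
    (hP : P.PosSemidef) (hQ : Q.IsHermitian) (hη : 0 ≤ η)
    (h : (P * Q + Q * P - η • P).PosSemidef) : (Q * P * Q - (η ^ 2 / 4) • P).PosSemidef := by
  classical
  set S := Q - (η / 2) • (1 : Matrix n n 𝕜)
  have hS : Sᴴ = S := by simp [S, hQ.eq]
  have key : Q * P * Q - (η ^ 2 / 4) • P = Sᴴ * P * S + (η / 2) • (P * Q + Q * P - η • P) := by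
    simp only [hS, S, sub_mul, mul_sub, smul_mul_assoc, mul_smul_comm, one_mul, mul_one, smul_sub,
      smul_add, smul_smul]
    module
  rw [key]
  exact (hP.conjTranspose_mul_mul_same S).add (h.smul (by positivity))

theorem PosDef.inv_mul_mul_inv_add_smul [DecidableEq n] {X Y R : Matrix n n 𝕜} {β : ℝ}
    (hR : R.IsHermitian) (hRu : IsUnit R.det) (h : (X + β • (R * Y * R)).PosDef) :
    (R⁻¹ * X * R⁻¹ + β • Y).PosDef := by
  have hconj := (IsUnit.posDef_star_left_conjugate_iff
    ((isUnit_iff_isUnit_det _).2 (isUnit_nonsing_inv_det R hRu))).2 h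
  rw [star_eq_conjTranspose, hR.inv.eq] at hconj
  simpa only [Matrix.mul_add, Matrix.add_mul, mul_smul_comm, smul_mul_assoc, Matrix.mul_assoc,
    mul_nonsing_inv _ hRu, nonsing_inv_mul_cancel_left _ _ hRu, Matrix.mul_one] using hconj

end Matrix

theorem stmt7_general {N q : ℕ} (dims : Fin N → ℕ)
    (C : Fin q → Finset (Fin N)) (A B : Matrix (Idx dims) (Idx dims) ℝ)
    (Zt Qt : Matrix (CIdx dims C) (CIdx dims C) ℝ)
    (hZt : CliqueBlkDiag dims C Zt) (hQt : CliqueBlkDiag dims C Qt) (hQpd : Qt.PosDef)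
    (ρ η : ℝ) (hη : 0 < η)
    (h1 : (Phi dims C A B Qt Zt + ρ • Mmat dims C).PosDef)
    (h2 : (N0 dims C * Qt + Qt * N0 dims C - η • N0 dims C).PosSemidef) :
    (∃ β : ℝ,
      ((fromBlocks Qt 0 0 Qt)⁻¹ * Phi dims C A B Qt Zt * (fromBlocks Qt 0 0 Qt)⁻¹
        + β • Mmat dims C).PosDef) ∧
    ∃ (Zt' Qt' : Matrix (CIdx dims C) (CIdx dims C) ℝ) (ρ' : ℝ),
      CliqueBlkDiag dims C Zt' ∧ CliqueBlkDiag dims C Qt' ∧ Qt'.PosDef ∧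
      (Phi dims C A B Qt' Zt' +
        ρ' • ((fromBlocks Qt' 0 0 Qt') * Mmat dims C * (fromBlocks Qt' 0 0 Qt'))).PosDef ∧
      gainCl dims C Zt Qt = gainCl dims C Zt' Qt' := by
  set R := fromBlocks Qt 0 0 Qt
  set M := Mmat dims C
  have hN0 : (N0 dims C).PosSemidef := by
    simpa [N0, conjTranspose_eq_transpose_of_trivial] using
      posSemidef_one_sub_mul_inv_mul (Emat dims C)
  have hM : M.PosSemidef := hN0.fromBlocks_zero hN0
  have hR : R.IsHermitian := by
    simp only [R, IsHermitian, fromBlocks_conjTranspose, conjTranspose_zero, hQpd.1.eq]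
  have hRu : IsUnit R.det := by
    have hQu := (isUnit_iff_isUnit_det Qt).1 hQpd.isUnit
    rw [det_fromBlocks_zero₂₁]
    exact hQu.mul hQu
  have hanti : M * R + R * M - η • M
      = fromBlocks (N0 dims C * Qt + Qt * N0 dims C - η • N0 dims C) 0 0
          (N0 dims C * Qt + Qt * N0 dims C - η • N0 dims C) := by
    simp [M, R, Mmat, fromBlocks_multiply, fromBlocks_add, fromBlocks_smul, sub_eq_add_neg,
      fromBlocks_neg]
  have hgap : (R * M * R - (η ^ 2 / 4) • M).PosSemidef :=
    hM.mul_mul_sub_smul_of_anticommutator hR hη.le (hanti ▸ h2.fromBlocks_zero h2)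
  set β := max ρ 0 / (η ^ 2 / 4)
  have hmain : (Phi dims C A B Qt Zt + β • (R * M * R)).PosDef := by
    convert h1.add_posSemidef (hM.smul_sub_smul_of_sub_smul (by positivity) hgap ρ) using 1
    abel
  exact ⟨⟨β, hmain.inv_mul_mul_inv_add_smul hR hRu⟩, Zt, Qt, β, hZt, hQt, hQpd, hmain, rfl⟩

/-- Lemma 4, second inclusion: `𝒦_𝒮 ⊆ 𝒦̂_𝒮`. -/
theorem stmt7 {N q : ℕ} (Gr : SimpleGraph (Fin N)) (dims : Fin N → ℕ)
    (C : Fin q → Finset (Fin N)) (hclq : IsCliques Gr C) (hass : Assumption1 Gr C)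
    (A B : Matrix (Idx dims) (Idx dims) ℝ)
    (Zt Qt : Matrix (CIdx dims C) (CIdx dims C) ℝ)
    (hZt : CliqueBlkDiag dims C Zt) (hQt : CliqueBlkDiag dims C Qt) (hQpd : Qt.PosDef)
    (ρ η : ℝ) (hη : 0 < η)
    (h1 : (Phi dims C A B Qt Zt + ρ • Mmat dims C).PosDef)
    (h2 : (N0 dims C * Qt + Qt * N0 dims C - η • N0 dims C).PosSemidef) :
    (∃ β : ℝ,
      ((fromBlocks Qt 0 0 Qt)⁻¹ * Phi dims C A B Qt Zt * (fromBlocks Qt 0 0 Qt)⁻¹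
        + β • Mmat dims C).PosDef) ∧
    ∃ (Zt' Qt' : Matrix (CIdx dims C) (CIdx dims C) ℝ) (ρ' : ℝ),
      CliqueBlkDiag dims C Zt' ∧ CliqueBlkDiag dims C Qt' ∧ Qt'.PosDef ∧
      (Phi dims C A B Qt' Zt' +
        ρ' • ((fromBlocks Qt' 0 0 Qt') * Mmat dims C * (fromBlocks Qt' 0 0 Qt'))).PosDef ∧
      gainCl dims C Zt Qt = gainCl dims C Zt' Qt' :=
  stmt7_general dims C A B Zt Qt hZt hQt hQpd ρ η hη h1 h2
end

section
/- (Theorem 1, part 1) Under Assumption 1, 𝒦_{𝒮,ext} ⊆ 𝒦̂_{𝒮,ext}: if Z̃ and G̃ are clique-block-diagonal, Q̃ ≻ 0, and there exist ρ ∈ ℝ and η > 0 with Ψ(G̃,Q̃,Z̃) + ρM ≻ 0 and G̃ᵀN₀ + N₀G̃ ⪰ ηN₀, then G̃ is invertible and there exists μ ∈ ℝ such that Ψ(G̃,Q̃,Z̃) + μ H̃ᵀMH̃ ≻ 0 with H̃ = blkdiag(G̃,G̃); in particular the gain (EᵀE)⁻¹Eᵀ Z̃ G̃⁻¹ E belongs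 to 𝒦̂_{𝒮,ext}. -/
open Matrix

/-- `Ψ(G̃, Q̃, Z̃) = [[G̃+G̃ᵀ−Q̃, (ÃG̃+B̃Z̃)ᵀ], [ÃG̃+B̃Z̃, Q̃]]`. -/
noncomputable def Psi {N q : ℕ} (dims : Fin N → ℕ) (C : Fin q → Finset (Fin N))
    (A B : Matrix (Idx dims) (Idx dims) ℝ)
    (Gt Qt Zt : Matrix (CIdx dims C) (CIdx dims C) ℝ) :
    Matrix (CIdx dims C ⊕ CIdx dims C) (CIdx dims C ⊕ CIdx dims C) ℝ :=
  fromBlocks (Gt + Gtᵀ - Qt) (tilde dims C A * Gt + tilde dims C B * Zt)ᵀ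
    (tilde dims C A * Gt + tilde dims C B * Zt) Qt

/-!
`N₀` is the orthogonal projection onto the orthogonal complement of the range of `E`.
Completing the square in `G̃ᵀN₀ + N₀G̃ ⪰ ηN₀` gives `G̃ᵀN₀G̃ ⪰ (η²/4) N₀`, hence
`H̃ᵀMH̃ ⪰ (η²/4) M`; since `M ⪰ 0`, the term `ρM` of the first inequality can be traded for
the nonnegative multiple `μ = max ρ 0 / (η²/4)` of `H̃ᵀMH̃`. Invertibility of `G̃` is then read
off the `(1,1)` block: on a kernel vector `x` of `G̃` its quadratic form is `-xᵀQ̃x ≤ 0`.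
-/

section Projection

variable {ι κ : Type*}

theorem Matrix.PosDef.add_smul_of_posSemidef_sub_smul {X Y M : Matrix ι ι ℝ} {ρ c : ℝ}
    (h : (X + ρ • M).PosDef) (hM : M.PosSemidef) (hc : 0 < c) (hY : (Y - c • M).PosSemidef) :
    (X + (max ρ 0 / c) • Y).PosDef := by
  set μ := max ρ 0 / c
  have hμ : 0 ≤ μ := div_nonneg (le_max_right ρ 0) hc.le
  have hμc : ρ ≤ μ * c := by rw [div_mul_cancel₀ _ hc.ne']; exact le_max_left ρ 0
  have hsplit : X + μ • Y = (X + ρ • M) + (μ • (Y - c • M) + (μ * c - ρ) • M) := by module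
  rw [hsplit]
  exact h.add_posSemidef ((hY.smul hμ).add (hM.smul (sub_nonneg.mpr hμc)))

variable [Fintype ι] [Fintype κ]

theorem Matrix.PosSemidef.fromBlocks_zero_s9 {A : Matrix ι ι ℝ} {D : Matrix κ κ ℝ}
    (hA : A.PosSemidef) (hD : D.PosSemidef) : (fromBlocks A 0 0 D).PosSemidef := by
  classical
  have hL := hA.conjTranspose_mul_mul_same (fromCols (1 : Matrix ι ι ℝ) (0 : Matrix ι κ ℝ))
  have hR := hD.conjTranspose_mul_mul_same (fromCols (0 : Matrix κ ι ℝ) (1 : Matrix κ κ ℝ))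
  convert hL.add hR using 1
  ext (i | i) (j | j) <;> simp [transpose_fromCols, fromRows_mul]

theorem Matrix.posSemidef_of_transpose_eq_of_isIdempotentElem {P : Matrix ι ι ℝ}
    (hPt : Pᵀ = P) (hP : IsIdempotentElem P) : P.PosSemidef := by
  have hPP : Pᴴ * P = P := by rw [conjTranspose_eq_transpose_of_trivial, hPt, hP.eq]
  exact hPP ▸ posSemidef_conjTranspose_mul_self P

theorem Matrix.posSemidef_transpose_mul_mul_sub_of_projection {P G : Matrix ι ι ℝ}
    (hPt : Pᵀ = P) (hP : IsIdempotentElem P) {η : ℝ} (hη : 0 ≤ η)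
    (h : (Gᵀ * P + P * G - η • P).PosSemidef) :
    (Gᵀ * P * G - (η ^ 2 / 4) • P).PosSemidef := by
  -- complete the square: `(PG - (η/2)P)ᵀ (PG - (η/2)P) = GᵀPG - (η/2)(GᵀP + PG) + (η²/4)P`
  set R := P * G - (η / 2) • P
  have hRR : Rᴴ * R = Gᵀ * P * G - (η / 2) • (Gᵀ * P + P * G) + (η ^ 2 / 4) • P := by
    have hGPPG : Gᵀ * P * (P * G) = Gᵀ * P * G := by
      rw [Matrix.mul_assoc, ← Matrix.mul_assoc P, hP.eq, Matrix.mul_assoc]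
    have hGPP : Gᵀ * P * P = Gᵀ * P := by rw [Matrix.mul_assoc, hP.eq]
    have hPPG : P * (P * G) = P * G := by rw [← Matrix.mul_assoc, hP.eq]
    simp only [R, conjTranspose_eq_transpose_of_trivial, transpose_sub, transpose_mul,
      transpose_smul, hPt, Matrix.sub_mul, Matrix.mul_sub, Matrix.smul_mul, Matrix.mul_smul,
      hGPPG, hGPP, hPPG, hP.eq]
    module
  have hsplit : Gᵀ * P * G - (η ^ 2 / 4) • P = Rᴴ * R + (η / 2) • (Gᵀ * P + P * G - η • P) := by
    rw [hRR]
    module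
  rw [hsplit]
  exact (posSemidef_conjTranspose_mul_self R).add (h.smul (by positivity))

variable {R : Type*} [CommRing R] {m n : Type*} [Fintype m] [Fintype n] [DecidableEq n]

theorem Matrix.transpose_mul_inv_mul_transpose (E : Matrix m n R) :
    (E * (Eᵀ * E)⁻¹ * Eᵀ)ᵀ = E * (Eᵀ * E)⁻¹ * Eᵀ := by
  rw [transpose_mul, transpose_mul, transpose_transpose, transpose_nonsing_inv, transpose_mul,
    transpose_transpose, Matrix.mul_assoc]

theorem Matrix.isIdempotentElem_mul_inv_mul_transpose (E : Matrix m n R)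
    (h : IsUnit (Eᵀ * E).det) : IsIdempotentElem (E * (Eᵀ * E)⁻¹ * Eᵀ) := by
  simp only [IsIdempotentElem, Matrix.mul_assoc]
  rw [← Matrix.mul_assoc Eᵀ E, nonsing_inv_mul_cancel_left _ _ h]

theorem Matrix.isUnit_of_posDef_add_transpose_sub_add [DecidableEq ι] {G Q P : Matrix ι ι ℝ}
    (h : (G + Gᵀ - Q + Gᵀ * P * G).PosDef) (hQ : Q.PosSemidef) : IsUnit G := by
  rw [← mulVec_injective_iff_isUnit]
  intro x y hxy
  by_contra hne
  have hker : G *ᵥ (x - y) = 0 := by rw [mulVec_sub, hxy, sub_self]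
  have hpos := h.dotProduct_mulVec_pos (sub_ne_zero.mpr hne)
  have hGT : (x - y) ⬝ᵥ (Gᵀ *ᵥ (x - y)) = 0 := by
    rw [dotProduct_mulVec, vecMul_transpose, hker, zero_dotProduct]
  have hQ' := hQ.dotProduct_mulVec_nonneg (x - y)
  simp only [star_trivial, add_mulVec, sub_mulVec, ← mulVec_mulVec, hker, mulVec_zero,
    dotProduct_add, dotProduct_sub, dotProduct_zero, hGT] at hpos hQ'
  linarith

end Projection

section CliqueLifting

variable {N q : ℕ} (dims : Fin N → ℕ) (C : Fin q → Finset (Fin N))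

theorem N0_transpose : (N0 dims C)ᵀ = N0 dims C := by
  rw [N0, transpose_sub, transpose_one, transpose_mul_inv_mul_transpose]

variable {C}

theorem Emat_mulVec (x : Idx dims → ℝ) (c : CIdx dims C) :
    (Emat dims C *ᵥ x) c = x ⟨c.2.1.1, c.2.2⟩ := by
  simp [Matrix.mulVec, Emat, dotProduct]

theorem Emat_mulVec_injective (hcov : ∀ i : Fin N, ∃ k, i ∈ C k) :
    Function.Injective (Emat dims C).mulVec := by
  intro x y hxy
  funext ⟨i, a⟩
  obtain ⟨k, hk⟩ := hcov i
  simpa only [Emat_mulVec] using congrFun hxy ⟨k, ⟨i, hk⟩, a⟩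

theorem isUnit_det_Emat_transpose_mul (hcov : ∀ i : Fin N, ∃ k, i ∈ C k) :
    IsUnit ((Emat dims C)ᵀ * Emat dims C).det :=
  (PosDef.conjTranspose_mul_self _ (Emat_mulVec_injective dims hcov)).det_pos.ne'.isUnit

theorem isIdempotentElem_N0 (hcov : ∀ i : Fin N, ∃ k, i ∈ C k) :
    IsIdempotentElem (N0 dims C) :=
  (isIdempotentElem_mul_inv_mul_transpose _ (isUnit_det_Emat_transpose_mul dims hcov)).one_sub

theorem posSemidef_Mmat (hcov : ∀ i : Fin N, ∃ k, i ∈ C k) : (Mmat dims C).PosSemidef :=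
  have hN0 := posSemidef_of_transpose_eq_of_isIdempotentElem (N0_transpose dims C)
    (isIdempotentElem_N0 dims hcov)
  hN0.fromBlocks_zero_s9 hN0

theorem transpose_mul_Mmat_mul (G : Matrix (CIdx dims C) (CIdx dims C) ℝ) :
    (fromBlocks G 0 0 G)ᵀ * Mmat dims C * fromBlocks G 0 0 G =
      fromBlocks (Gᵀ * N0 dims C * G) 0 0 (Gᵀ * N0 dims C * G) := by
  simp [Mmat, fromBlocks_transpose, fromBlocks_multiply]

end CliqueLifting

theorem stmt9_general {N q : ℕ} (Gr : SimpleGraph (Fin N)) (dims : Fin N → ℕ)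
    (C : Fin q → Finset (Fin N)) (hass : Assumption1 Gr C)
    (A B : Matrix (Idx dims) (Idx dims) ℝ)
    (Zt Gt Qt : Matrix (CIdx dims C) (CIdx dims C) ℝ)
    (hZt : CliqueBlkDiag dims C Zt) (hGt : CliqueBlkDiag dims C Gt) (hQpd : Qt.PosDef)
    (ρ η : ℝ) (hη : 0 < η)
    (h1 : (Psi dims C A B Gt Qt Zt + ρ • Mmat dims C).PosDef)
    (h2 : (Gtᵀ * N0 dims C + N0 dims C * Gt - η • N0 dims C).PosSemidef) :
    IsUnit Gt ∧
    (∃ μ : ℝ, (Psi dims C A B Gt Qt Zt +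
        μ • ((fromBlocks Gt 0 0 Gt)ᵀ * Mmat dims C * (fromBlocks Gt 0 0 Gt))).PosDef) ∧
    ∃ (Zt' Gt' Qt' : Matrix (CIdx dims C) (CIdx dims C) ℝ) (ρ' : ℝ),
      CliqueBlkDiag dims C Zt' ∧ CliqueBlkDiag dims C Gt' ∧ IsUnit Gt' ∧ Qt'.PosDef ∧
      (Psi dims C A B Gt' Qt' Zt' +
        ρ' • ((fromBlocks Gt' 0 0 Gt')ᵀ * Mmat dims C * (fromBlocks Gt' 0 0 Gt'))).PosDef ∧
      gainCl dims C Zt Gt = gainCl dims C Zt' Gt' := by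
  have hcov := hass.1
  have hN0conj := posSemidef_transpose_mul_mul_sub_of_projection (N0_transpose dims C)
    (isIdempotentElem_N0 dims hcov) hη.le h2
  have hdom : ((fromBlocks Gt 0 0 Gt)ᵀ * Mmat dims C * fromBlocks Gt 0 0 Gt
      - (η ^ 2 / 4) • Mmat dims C).PosSemidef := by
    convert hN0conj.fromBlocks_zero_s9 hN0conj using 1
    rw [transpose_mul_Mmat_mul, Mmat, fromBlocks_smul, sub_eq_add_neg, fromBlocks_neg,
      fromBlocks_add]
    simp [sub_eq_add_neg]
  set μ := max ρ 0 / (η ^ 2 / 4)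
  have hμ := h1.add_smul_of_posSemidef_sub_smul (posSemidef_Mmat dims hcov) (by positivity) hdom
  have hG : IsUnit Gt := by
    have h11 := hμ.submatrix Sum.inl_injective
    rw [transpose_mul_Mmat_mul, Psi, fromBlocks_smul, fromBlocks_add] at h11
    refine isUnit_of_posDef_add_transpose_sub_add (P := μ • N0 dims C) ?_ hQpd.posSemidef
    rwa [Matrix.mul_smul, Matrix.smul_mul]
  exact ⟨hG, ⟨μ, hμ⟩, Zt, Gt, Qt, μ, hZt, hGt, hG, hQpd, hμ, rfl⟩

/-- Theorem 1, part 1: `𝒦_{𝒮,ext} ⊆ 𝒦̂_{𝒮,ext}`. -/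
theorem stmt9 {N q : ℕ} (Gr : SimpleGraph (Fin N)) (dims : Fin N → ℕ)
    (C : Fin q → Finset (Fin N)) (hclq : IsCliques Gr C) (hass : Assumption1 Gr C)
    (A B : Matrix (Idx dims) (Idx dims) ℝ)
    (Zt Gt Qt : Matrix (CIdx dims C) (CIdx dims C) ℝ)
    (hZt : CliqueBlkDiag dims C Zt) (hGt : CliqueBlkDiag dims C Gt) (hQpd : Qt.PosDef)
    (ρ η : ℝ) (hη : 0 < η)
    (h1 : (Psi dims C A B Gt Qt Zt + ρ • Mmat dims C).PosDef)
    (h2 : (Gtᵀ * N0 dims C + N0 dims C * Gt - η • N0 dims C).PosSemidef) :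
    IsUnit Gt ∧
    (∃ μ : ℝ, (Psi dims C A B Gt Qt Zt +
        μ • ((fromBlocks Gt 0 0 Gt)ᵀ * Mmat dims C * (fromBlocks Gt 0 0 Gt))).PosDef) ∧
    ∃ (Zt' Gt' Qt' : Matrix (CIdx dims C) (CIdx dims C) ℝ) (ρ' : ℝ),
      CliqueBlkDiag dims C Zt' ∧ CliqueBlkDiag dims C Gt' ∧ IsUnit Gt' ∧ Qt'.PosDef ∧
      (Psi dims C A B Gt' Qt' Zt' +
        ρ' • ((fromBlocks Gt' 0 0 Gt')ᵀ * Mmat dims C * (fromBlocks Gt' 0 0 Gt'))).PosDef ∧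
      gainCl dims C Zt Gt = gainCl dims C Zt' Gt' :=
  stmt9_general Gr dims C hass A B Zt Gt Qt hZt hGt hQpd ρ η hη h1 h2
end

section
/- (Theorem 1, part 2) Under Assumption 1, 𝒦_𝒮 ⊆ 𝒦_{𝒮,ext}: every gain (EᵀE)⁻¹Eᵀ Z̃ Q̃⁻¹ E with Z̃, Q̃ clique-block-diagonal, Q̃ ≻ 0, for which there exist ρ ∈ ℝ and η > 0 with Φ(Q̃,Z̃) + ρM ≻ 0 and N₀Q̃ + Q̃N₀ ⪰ ηN₀, belongs to 𝒦_{𝒮,ext} (take G̃ = G̃ᵀ = Q̃). -/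
open Matrix

theorem Psi_self_eq_Phi {N q : ℕ} (dims : Fin N → ℕ) (C : Fin q → Finset (Fin N))
    (A B : Matrix (Idx dims) (Idx dims) ℝ) {Qt : Matrix (CIdx dims C) (CIdx dims C) ℝ}
    (hQ : Qtᵀ = Qt) (Zt : Matrix (CIdx dims C) (CIdx dims C) ℝ) :
    Psi dims C A B Qt Qt Zt = Phi dims C A B Qt Zt := by
  rw [Psi, Phi, hQ, add_sub_cancel_right]

theorem stmt10_general {N q : ℕ} (dims : Fin N → ℕ)
    (C : Fin q → Finset (Fin N))
    (A B : Matrix (Idx dims) (Idx dims) ℝ)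
    (Zt Qt : Matrix (CIdx dims C) (CIdx dims C) ℝ)
    (hZt : CliqueBlkDiag dims C Zt) (hQt : CliqueBlkDiag dims C Qt) (hQpd : Qt.PosDef)
    (ρ η : ℝ) (hη : 0 < η)
    (h1 : (Phi dims C A B Qt Zt + ρ • Mmat dims C).PosDef)
    (h2 : (N0 dims C * Qt + Qt * N0 dims C - η • N0 dims C).PosSemidef) :
    ∃ (Zt' Gt' Qt' : Matrix (CIdx dims C) (CIdx dims C) ℝ) (ρ' η' : ℝ),
      CliqueBlkDiag dims C Zt' ∧ CliqueBlkDiag dims C Gt' ∧ IsUnit Gt' ∧ Qt'.PosDef ∧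
      0 < η' ∧
      (Psi dims C A B Gt' Qt' Zt' + ρ' • Mmat dims C).PosDef ∧
      (Gt'ᵀ * N0 dims C + N0 dims C * Gt' - η' • N0 dims C).PosSemidef ∧
      gainCl dims C Zt Qt = gainCl dims C Zt' Gt' := by
  have hsymm : Qtᵀ = Qt := hQpd.isHermitian
  refine ⟨Zt, Qt, Qt, ρ, η, hZt, hQt, hQpd.isUnit, hQpd, hη, ?_, ?_, rfl⟩
  · rwa [Psi_self_eq_Phi dims C A B hsymm]
  · rwa [hsymm, add_comm (Qt * N0 dims C)]

/-- Theorem 1, part 2: `𝒦_𝒮 ⊆ 𝒦_{𝒮,ext}`. -/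
theorem stmt10 {N q : ℕ} (Gr : SimpleGraph (Fin N)) (dims : Fin N → ℕ)
    (C : Fin q → Finset (Fin N)) (hclq : IsCliques Gr C) (hass : Assumption1 Gr C)
    (A B : Matrix (Idx dims) (Idx dims) ℝ)
    (Zt Qt : Matrix (CIdx dims C) (CIdx dims C) ℝ)
    (hZt : CliqueBlkDiag dims C Zt) (hQt : CliqueBlkDiag dims C Qt) (hQpd : Qt.PosDef)
    (ρ η : ℝ) (hη : 0 < η)
    (h1 : (Phi dims C A B Qt Zt + ρ • Mmat dims C).PosDef)
    (h2 : (N0 dims C * Qt + Qt * N0 dims C - η • N0 dims C).PosSemidef) :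
    ∃ (Zt' Gt' Qt' : Matrix (CIdx dims C) (CIdx dims C) ℝ) (ρ' η' : ℝ),
      CliqueBlkDiag dims C Zt' ∧ CliqueBlkDiag dims C Gt' ∧ IsUnit Gt' ∧ Qt'.PosDef ∧
      0 < η' ∧
      (Psi dims C A B Gt' Qt' Zt' + ρ' • Mmat dims C).PosDef ∧
      (Gt'ᵀ * N0 dims C + N0 dims C * Gt' - η' • N0 dims C).PosSemidef ∧
      gainCl dims C Zt Qt = gainCl dims C Zt' Gt' :=
  stmt10_general dims C A B Zt Qt hZt hQt hQpd ρ η hη h1 h2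
end
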